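/- arXiv:2402.01377 — 9 statements merged into one kernel-verified Lean document; each statement's English description precedes it below -/
import Mathlib

section
/- A vector $f \in X$ is chain recurrent for $T$ if and only if for every $\delta > 0$ there exists a $\delta$-chain for $T$ from $f$ to the zero vector $0_X$ and a $\delta$-chain for $T$ from $0_X$ to $f$. -/
/-- A δ-chain for `T` from `f` to `g`: a finite sequence `(u l)_{l=0}^m`, `m ≥ 1`,
with `u 0 = f`, `u m = g`, and `‖u l - T (u (l-1))‖ < δ` for `1 ≤ l ≤ m`. -/
def IsDeltaChain {X : Type*} [NormedAddCommGroup X] [NormedSpace ℂ X]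
    (T : X →L[ℂ] X) (δ : ℝ) (f g : X) : Prop :=
  ∃ (m : ℕ) (u : ℕ → X), 1 ≤ m ∧ u 0 = f ∧ u m = g ∧
    ∀ l, 1 ≤ l → l ≤ m → ‖u l - T (u (l - 1))‖ < δ

/-- `f` is a chain recurrent vector for `T`. -/
def ChainRecVec {X : Type*} [NormedAddCommGroup X] [NormedSpace ℂ X]
    (T : X →L[ℂ] X) (f : X) : Prop :=
  ∀ δ : ℝ, 0 < δ → IsDeltaChain T δ f f

lemma chain_concat {X : Type*} [NormedAddCommGroup X] [NormedSpace ℂ X]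
    {T : X →L[ℂ] X} {δ : ℝ} {a b c : X}
    (h1 : IsDeltaChain T δ a b) (h2 : IsDeltaChain T δ b c) :
    IsDeltaChain T δ a c := by
  obtain ⟨m, u, hm, hu0, hum, hu⟩ := h1
  obtain ⟨n, v, hn, hv0, hvn, hv⟩ := h2
  refine ⟨m + n, fun i => if i ≤ m then u i else v (i - m), by omega, ?_, ?_, ?_⟩
  · simp [hu0]
  · have h : ¬ (m + n ≤ m) := by omega
    simp only [h, if_false]
    simpa using hvn
  · intro l hl1 hlm
    by_cases h : l ≤ m
    · have h' : l - 1 ≤ m := by omega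
      simp only [if_pos h, if_pos h']
      exact hu l hl1 h
    · simp only [if_neg h]
      by_cases h2 : l - 1 ≤ m
      · have hl : l = m + 1 := by omega
        subst hl
        simp only [if_pos h2]
        have e1 : m + 1 - m = 1 := by omega
        have e2 : m + 1 - 1 = m := by omega
        rw [e1, e2, hum, ← hv0]
        simpa using hv 1 le_rfl hn
      · simp only [if_neg h2]
        have e1 : l - m - 1 = l - 1 - m := by omega
        have := hv (l - m) (by omega) (by omega)
        rw [e1] at this
        exact this

lemma chain_mono {X : Type*} [NormedAddCommGroup X] [NormedSpace ℂ X]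
    {T : X →L[ℂ] X} {δ δ' : ℝ} {a b : X} (hδ : δ ≤ δ')
    (h : IsDeltaChain T δ a b) : IsDeltaChain T δ' a b := by
  obtain ⟨m, u, hm, hu0, hum, hu⟩ := h
  exact ⟨m, u, hm, hu0, hum, fun l h1 h2 => lt_of_lt_of_le (hu l h1 h2) hδ⟩

lemma chain_smul {X : Type*} [NormedAddCommGroup X] [NormedSpace ℂ X]
    {T : X →L[ℂ] X} {δ : ℝ} {a b : X} (s : ℂ) (hs : ‖s‖ ≤ 1)
    (h : IsDeltaChain T δ a b) : IsDeltaChain T δ (s • a) (s • b) := by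
  obtain ⟨m, u, hm, hu0, hum, hu⟩ := h
  refine ⟨m, fun i => s • u i, hm, by simp only; rw [hu0], by simp only; rw [hum], ?_⟩
  intro l h1 h2
  have key : ‖s • u l - T (s • u (l - 1))‖ = ‖s‖ * ‖u l - T (u (l - 1))‖ := by
    rw [map_smul, ← smul_sub, norm_smul]
  rw [key]
  calc ‖s‖ * ‖u l - T (u (l - 1))‖ ≤ 1 * ‖u l - T (u (l - 1))‖ := by
        apply mul_le_mul_of_nonneg_right hs (norm_nonneg _)
    _ = ‖u l - T (u (l - 1))‖ := one_mul _
    _ < δ := hu l h1 h2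

lemma chain_single {X : Type*} [NormedAddCommGroup X] [NormedSpace ℂ X]
    {T : X →L[ℂ] X} {δ : ℝ} {b c : X} (h : ‖c - T b‖ < δ) :
    IsDeltaChain T δ b c := by
  refine ⟨1, fun i => if i = 0 then b else c, le_rfl, by simp, by simp, ?_⟩
  intro l h1 h2
  have hl : l = 1 := by omega
  subst hl
  simpa using h

theorem stmt_1 {X : Type*} [NormedAddCommGroup X] [NormedSpace ℂ X] [CompleteSpace X]
    (T : X →L[ℂ] X) (f : X) :
    ChainRecVec T f ↔
      ∀ δ : ℝ, 0 < δ → IsDeltaChain T δ f 0 ∧ IsDeltaChain T δ 0 f := by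
  constructor
  · intro hf δ hδ
    set M : ℝ := ‖T f‖ with hM
    have hM0 : 0 ≤ M := norm_nonneg _
    set ε : ℝ := δ / (2 * (M + 1)) with hε
    have hε0 : 0 < ε := by positivity
    set s : ℝ := max (1 - ε) (1/2) with hsdef
    have hs0 : 0 < s := lt_of_lt_of_le (by norm_num) (le_max_right _ _)
    have hs1 : s < 1 := by
      apply max_lt <;> [linarith; norm_num]
    have hsub : 1 - s ≤ ε := by
      rcases le_total (1 - ε) (1/2) with h | h
      · have : s = 1/2 := by rw [hsdef]; exact max_eq_right h
        rw [this]; linarith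
      · have : s = 1 - ε := by rw [hsdef]; exact max_eq_left h
        rw [this]; linarith
    have hεM : ε * (M + 1) = δ / 2 := by
      rw [hε, div_mul_eq_mul_div, div_eq_div_iff (by positivity) (by norm_num)]
      ring
    have hsM : (1 - s) * M < δ / 2 := by
      have h1 : (1 - s) * M ≤ ε * M :=
        mul_le_mul_of_nonneg_right hsub hM0
      have h2 : ε * M < ε * (M + 1) := by nlinarith
      linarith [hεM ▸ lt_of_le_of_lt h1 h2]
    have hsnorm : ‖((s : ℂ))‖ = s := by
      rw [Complex.norm_real, Real.norm_eq_abs, abs_of_pos hs0]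
    obtain ⟨m, u, hm, hu0, hum, hu⟩ := hf (δ/2) (by linarith)
    have h1bound : ‖u 1 - T f‖ < δ / 2 := by
      have := hu 1 le_rfl hm
      simpa [hu0] using this
    -- chain from f to s • f
    have down : IsDeltaChain T δ f ((s : ℂ) • f) := by
      refine ⟨m, fun i => if i = 0 then f else (s : ℂ) • u i, hm, by simp, ?_, ?_⟩
      · have hm0 : m ≠ 0 := by omega
        simp [hm0, hum]
      · intro l h1 h2
        by_cases hl : l = 1
        · subst hl
          simp only [one_ne_zero, ↓reduceIte, Nat.sub_self]
          have key : (s : ℂ) • u 1 - T f = (s : ℂ) • (u 1 - T f) + ((s : ℂ) - 1) • T f := by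
            rw [smul_sub, sub_smul, one_smul]; abel
          rw [key]
          calc ‖(s : ℂ) • (u 1 - T f) + ((s : ℂ) - 1) • T f‖
              ≤ ‖(s : ℂ) • (u 1 - T f)‖ + ‖((s : ℂ) - 1) • T f‖ := norm_add_le _ _
            _ = s * ‖u 1 - T f‖ + (1 - s) * M := by
                rw [norm_smul, norm_smul, hsnorm]
                congr 2
                have : ((s : ℂ) - 1) = ((s - 1 : ℝ) : ℂ) := by push_cast; ring
                rw [this, Complex.norm_real, Real.norm_eq_abs, abs_of_nonpos (by linarith)]
                ring
            _ < δ / 2 + δ / 2 := by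
                have hs1' : s ≤ 1 := le_of_lt hs1
                have := mul_le_mul_of_nonneg_right hs1' (norm_nonneg (u 1 - T f))
                have h3 : s * ‖u 1 - T f‖ < δ / 2 := by nlinarith
                linarith
            _ = δ := by ring
        · have hl2 : 2 ≤ l := by omega
          have hne : l ≠ 0 := by omega
          have hne' : l - 1 ≠ 0 := by omega
          simp only [if_neg hne, if_neg hne']
          have key : ‖(s : ℂ) • u l - T ((s : ℂ) • u (l - 1))‖
              = s * ‖u l - T (u (l - 1))‖ := by
            rw [map_smul, ← smul_sub, norm_smul, hsnorm]
          rw [key]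
          have := hu l h1 h2
          nlinarith [norm_nonneg (u l - T (u (l - 1)))]
    -- chain from s • f to f
    have up : IsDeltaChain T δ ((s : ℂ) • f) f := by
      refine ⟨m, fun i => if i = 0 then (s : ℂ) • f else u i, hm, by simp, ?_, ?_⟩
      · have hm0 : m ≠ 0 := by omega
        simp [hm0, hum]
      · intro l h1 h2
        by_cases hl : l = 1
        · subst hl
          simp only [one_ne_zero, ↓reduceIte, Nat.sub_self]
          have key : u 1 - T ((s : ℂ) • f) = (u 1 - T f) + ((1 : ℂ) - s) • T f := by
            rw [map_smul, sub_smul, one_smul]; abel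
          rw [key]
          calc ‖(u 1 - T f) + ((1 : ℂ) - s) • T f‖
              ≤ ‖u 1 - T f‖ + ‖((1 : ℂ) - s) • T f‖ := norm_add_le _ _
            _ = ‖u 1 - T f‖ + (1 - s) * M := by
                rw [norm_smul]
                congr 2
                have : ((1 : ℂ) - s) = ((1 - s : ℝ) : ℂ) := by push_cast; ring
                rw [this, Complex.norm_real, Real.norm_eq_abs, abs_of_nonneg (by linarith)]
            _ < δ / 2 + δ / 2 := by linarith
            _ = δ := by ring
        · have hne : l ≠ 0 := by omega
          have hne' : l - 1 ≠ 0 := by omega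
          simp only [if_neg hne, if_neg hne']
          have := hu l h1 h2
          linarith
    have hpow_norm : ∀ k : ℕ, ‖((s : ℂ)) ^ k‖ = s ^ k := by
      intro k
      rw [norm_pow, hsnorm]
    have hpow_le : ∀ k : ℕ, s ^ k ≤ 1 := fun k =>
      pow_le_one₀ (le_of_lt hs0) (le_of_lt hs1)
    -- iterated chains
    have downk : ∀ k : ℕ, IsDeltaChain T δ f (((s : ℂ) ^ k) • f) := by
      intro k
      induction k with
      | zero =>
        simp only [pow_zero, one_smul]
        exact chain_mono (by linarith) ⟨m, u, hm, hu0, hum, hu⟩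
      | succ k ih =>
        have step := chain_smul ((s : ℂ) ^ k) (by rw [hpow_norm]; exact hpow_le k) down
        have : ((s : ℂ) ^ k) • ((s : ℂ) • f) = ((s : ℂ) ^ (k + 1)) • f := by
          rw [smul_smul, ← pow_succ]
        rw [this] at step
        exact chain_concat ih step
    have upk : ∀ k : ℕ, IsDeltaChain T δ (((s : ℂ) ^ k) • f) f := by
      intro k
      induction k with
      | zero =>
        simp only [pow_zero, one_smul]
        exact chain_mono (by linarith) ⟨m, u, hm, hu0, hum, hu⟩
      | succ k ih =>
        have step := chain_smul ((s : ℂ) ^ k) (by rw [hpow_norm]; exact hpow_le k) up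
        have : ((s : ℂ) ^ k) • ((s : ℂ) • f) = ((s : ℂ) ^ (k + 1)) • f := by
          rw [smul_smul, ← pow_succ]
        rw [this] at step
        exact chain_concat step ih
    -- choose k with s^k small
    set C : ℝ := M + ‖f‖ + 1 with hC
    have hC0 : 0 < C := by positivity
    obtain ⟨k, hk⟩ := exists_pow_lt_of_lt_one (show (0:ℝ) < δ / C by positivity) hs1
    have hk' : s ^ k * C < δ := by
      rw [← lt_div_iff₀ hC0]
      exact hk
    have hkM : s ^ k * M < δ := by nlinarith [pow_nonneg (le_of_lt hs0) k, norm_nonneg f]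
    have hkf : s ^ k * ‖f‖ < δ := by nlinarith [pow_nonneg (le_of_lt hs0) k, hM0]
    constructor
    · -- f → s^k f → 0
      apply chain_concat (downk k)
      apply chain_single
      have : ‖(0 : X) - T (((s : ℂ) ^ k) • f)‖ = s ^ k * M := by
        rw [zero_sub, norm_neg, map_smul, norm_smul, hpow_norm]
      rw [this]
      exact hkM
    · -- 0 → s^k f → f
      refine chain_concat ?_ (upk k)
      apply chain_single
      have : ‖((s : ℂ) ^ k) • f - T 0‖ = s ^ k * ‖f‖ := by
        rw [map_zero, sub_zero, norm_smul, hpow_norm]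
      rw [this]
      exact hkf
  · intro h δ hδ
    obtain ⟨h1, h2⟩ := h δ hδ
    exact chain_concat h1 h2
end

section
/- The set $CR(T)$ of chain recurrent vectors of a continuous linear operator $T$ on a Banach space $X$ is a closed linear subspace of $X$ that is invariant under $T$. -/
private lemma mod_sub_one_ne {l m : ℕ} (h : l % m ≠ 0) : (l - 1) % m = l % m - 1 := by
  rcases Nat.eq_zero_or_pos m with h0 | hm
  · simp [h0]
  · have hdm := Nat.div_add_mod l m
    have hr : l % m < m := Nat.mod_lt _ hm
    have hl1 : l - 1 = m * (l / m) + (l % m - 1) := by omega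
    rw [hl1, Nat.mul_add_mod]
    exact Nat.mod_eq_of_lt (by omega)

private lemma mod_sub_one_eq {l m : ℕ} (h : l % m = 0) (h1 : 1 ≤ l) (hm : 1 ≤ m) :
    (l - 1) % m = m - 1 := by
  obtain ⟨q, hq⟩ := Nat.dvd_of_mod_eq_zero h
  rcases q with _ | q'
  · omega
  · have : l = m * q' + m := by rw [hq, Nat.mul_succ]
    have hl1 : l - 1 = m * q' + (m - 1) := by omega
    rw [hl1, Nat.mul_add_mod]
    exact Nat.mod_eq_of_lt (by omega)

/-- Repeating a δ-chain from `f` to `f`: all steps of `u (· % m)` are δ-small. -/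
private lemma repeat_chain {X : Type*} [NormedAddCommGroup X] [NormedSpace ℂ X]
    (T : X →L[ℂ] X) {δ : ℝ} {f : X} {m : ℕ} {u : ℕ → X} (hm : 1 ≤ m)
    (h0 : u 0 = f) (hmf : u m = f)
    (hs : ∀ l, 1 ≤ l → l ≤ m → ‖u l - T (u (l - 1))‖ < δ) :
    ∀ l, 1 ≤ l → ‖u (l % m) - T (u ((l - 1) % m))‖ < δ := by
  intro l hl
  by_cases hr : l % m = 0
  · rw [hr, mod_sub_one_eq hr hl hm, h0, ← hmf]
    exact hs m hm le_rfl
  · rw [mod_sub_one_ne hr]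
    exact hs (l % m) (by omega) (le_of_lt (Nat.mod_lt _ (by omega)))

private lemma chainRec_add {X : Type*} [NormedAddCommGroup X] [NormedSpace ℂ X]
    (T : X →L[ℂ] X) {f g : X} (hf : ChainRecVec T f) (hg : ChainRecVec T g) :
    ChainRecVec T (f + g) := by
  intro δ hδ
  obtain ⟨m₁, u, hm₁, hu0, hum, hus⟩ := hf (δ / 2) (by linarith)
  obtain ⟨m₂, v, hm₂, hv0, hvm, hvs⟩ := hg (δ / 2) (by linarith)
  refine ⟨m₁ * m₂, fun l => u (l % m₁) + v (l % m₂),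
    Nat.one_le_iff_ne_zero.mpr (by positivity), ?_, ?_, ?_⟩
  · show u (0 % m₁) + v (0 % m₂) = f + g
    simp [hu0, hv0]
  · show u (m₁ * m₂ % m₁) + v (m₁ * m₂ % m₂) = f + g
    rw [Nat.mul_mod_right, Nat.mul_mod_left, hu0, hv0]
  · intro l hl _
    have h1 := repeat_chain T hm₁ hu0 hum hus l hl
    have h2 := repeat_chain T hm₂ hv0 hvm hvs l hl
    show ‖u (l % m₁) + v (l % m₂) - T (u ((l - 1) % m₁) + v ((l - 1) % m₂))‖ < δ
    have heq : u (l % m₁) + v (l % m₂) - T (u ((l - 1) % m₁) + v ((l - 1) % m₂)) =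
        (u (l % m₁) - T (u ((l - 1) % m₁))) + (v (l % m₂) - T (v ((l - 1) % m₂))) := by
      rw [map_add]; abel
    calc ‖u (l % m₁) + v (l % m₂) - T (u ((l - 1) % m₁) + v ((l - 1) % m₂))‖
        = ‖(u (l % m₁) - T (u ((l - 1) % m₁))) + (v (l % m₂) - T (v ((l - 1) % m₂)))‖ := by
          rw [heq]
      _ ≤ ‖u (l % m₁) - T (u ((l - 1) % m₁))‖ + ‖v (l % m₂) - T (v ((l - 1) % m₂))‖ :=
          norm_add_le _ _
      _ < δ / 2 + δ / 2 := by linarith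
      _ = δ := by ring

private lemma chainRec_zero {X : Type*} [NormedAddCommGroup X] [NormedSpace ℂ X]
    (T : X →L[ℂ] X) : ChainRecVec T (0 : X) := by
  intro δ hδ
  exact ⟨1, fun _ => 0, le_rfl, rfl, rfl, fun l _ _ => by simpa using hδ⟩

private lemma chainRec_smul {X : Type*} [NormedAddCommGroup X] [NormedSpace ℂ X]
    (T : X →L[ℂ] X) (c : ℂ) {f : X} (hf : ChainRecVec T f) :
    ChainRecVec T (c • f) := by
  by_cases hc : c = 0
  · simpa [hc] using chainRec_zero T
  · intro δ hδ
    have hcn : (0 : ℝ) < ‖c‖ := norm_pos_iff.mpr hc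
    obtain ⟨m, u, hm, hu0, hum, hus⟩ := hf (δ / ‖c‖) (by positivity)
    refine ⟨m, fun l => c • u l, hm, ?_, ?_, fun l hl hlm => ?_⟩
    · show c • u 0 = c • f; rw [hu0]
    · show c • u m = c • f; rw [hum]
    · show ‖c • u l - T (c • u (l - 1))‖ < δ
      have h1 : c • u l - T (c • u (l - 1)) = c • (u l - T (u (l - 1))) := by
        rw [map_smul, smul_sub]
      have h2 : δ / ‖c‖ * ‖c‖ = δ := div_mul_cancel₀ δ (ne_of_gt hcn)
      rw [h1, norm_smul]
      calc ‖c‖ * ‖u l - T (u (l - 1))‖ < ‖c‖ * (δ / ‖c‖) :=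
            mul_lt_mul_of_pos_left (hus l hl hlm) hcn
        _ = δ := by rw [mul_comm]; exact h2

private lemma chainRec_closed {X : Type*} [NormedAddCommGroup X] [NormedSpace ℂ X]
    (T : X →L[ℂ] X) : IsClosed {f : X | ChainRecVec T f} := by
  apply isClosed_of_closure_subset
  intro f hf δ hδ
  have hT1 : (0 : ℝ) < ‖T‖ + 1 := by positivity
  set ε := δ / (3 * (‖T‖ + 1)) with hε
  have hεpos : 0 < ε := by positivity
  have hεT : ε * (‖T‖ + 1) = δ / 3 := by
    rw [hε]; field_simp
  obtain ⟨g, hg, hfg⟩ := Metric.mem_closure_iff.mp hf ε hεpos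
  have hfg' : ‖f - g‖ < ε := by rwa [dist_eq_norm] at hfg
  obtain ⟨m, u, hm, hu0, hum, hus⟩ := hg (δ / 3) (by linarith)
  refine ⟨m, fun l => if l = 0 ∨ l = m then f else u l, hm, by simp, by simp, ?_⟩
  intro l hl hlm
  have key : ∀ j, ‖(if j = 0 ∨ j = m then f else u j) - u j‖ ≤ ε := by
    intro j
    by_cases hj : j = 0 ∨ j = m
    · rw [if_pos hj]
      rcases hj with h | h <;> rw [h]
      · rw [hu0]; exact hfg'.le
      · rw [hum]; exact hfg'.le
    · rw [if_neg hj]; simp [hεpos.le]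
  show ‖(if l = 0 ∨ l = m then f else u l) -
      T (if l - 1 = 0 ∨ l - 1 = m then f else u (l - 1))‖ < δ
  set a := (if l = 0 ∨ l = m then f else u l) with ha
  set b := (if l - 1 = 0 ∨ l - 1 = m then f else u (l - 1)) with hb
  have hbk : ‖b - u (l - 1)‖ ≤ ε := key (l - 1)
  have hak : ‖a - u l‖ ≤ ε := key l
  have hTb : ‖T (u (l - 1)) - T b‖ ≤ ‖T‖ * ε := by
    rw [← map_sub]
    calc ‖T (u (l - 1) - b)‖ ≤ ‖T‖ * ‖u (l - 1) - b‖ := T.le_opNorm _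
      _ ≤ ‖T‖ * ε := by
          rw [norm_sub_rev]
          exact mul_le_mul_of_nonneg_left hbk (norm_nonneg T)
  have hmid := hus l hl hlm
  calc ‖a - T b‖
      = ‖(a - u l) + (u l - T (u (l - 1))) + (T (u (l - 1)) - T b)‖ := by
        congr 1; abel
    _ ≤ ‖a - u l‖ + ‖u l - T (u (l - 1))‖ + ‖T (u (l - 1)) - T b‖ := norm_add₃_le
    _ < ε + δ / 3 + ‖T‖ * ε := by linarith
    _ ≤ δ / 3 + δ / 3 + δ / 3 - δ / 3 + δ / 3 := by nlinarith [norm_nonneg T]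
    _ ≤ δ := by linarith

private lemma chainRec_map {X : Type*} [NormedAddCommGroup X] [NormedSpace ℂ X]
    (T : X →L[ℂ] X) {f : X} (hf : ChainRecVec T f) : ChainRecVec T (T f) := by
  intro δ hδ
  have hT : (0 : ℝ) < ‖T‖ + 1 := by positivity
  obtain ⟨m, u, hm, hu0, hum, hus⟩ := hf (δ / (‖T‖ + 1)) (by positivity)
  refine ⟨m, fun l => T (u l), hm, ?_, ?_, fun l hl hlm => ?_⟩
  · show T (u 0) = T f; rw [hu0]
  · show T (u m) = T f; rw [hum]
  · show ‖T (u l) - T (T (u (l - 1)))‖ < δ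
    have h1 : T (u l) - T (T (u (l - 1))) = T (u l - T (u (l - 1))) := by rw [map_sub]
    have h2 : δ / (‖T‖ + 1) * (‖T‖ + 1) = δ := div_mul_cancel₀ δ (ne_of_gt hT)
    rw [h1]
    calc ‖T (u l - T (u (l - 1)))‖ ≤ ‖T‖ * ‖u l - T (u (l - 1))‖ := T.le_opNorm _
      _ ≤ (‖T‖ + 1) * ‖u l - T (u (l - 1))‖ :=
          mul_le_mul_of_nonneg_right (by linarith) (norm_nonneg _)
      _ < (‖T‖ + 1) * (δ / (‖T‖ + 1)) := mul_lt_mul_of_pos_left (hus l hl hlm) hT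
      _ = δ := by rw [mul_comm]; exact h2

theorem stmt_2 {X : Type*} [NormedAddCommGroup X] [NormedSpace ℂ X] [CompleteSpace X]
    (T : X →L[ℂ] X) :
    ∃ Y : Submodule ℂ X, (Y : Set X) = {f : X | ChainRecVec T f} ∧
      IsClosed (Y : Set X) ∧ ∀ f ∈ Y, T f ∈ Y := by
  refine ⟨{ carrier := {f : X | ChainRecVec T f},
            add_mem' := fun hf hg => chainRec_add T hf hg,
            zero_mem' := chainRec_zero T,
            smul_mem' := fun c f hf => chainRec_smul T c hf }, rfl, ?_, ?_⟩
  · exact chainRec_closed T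
  · intro f hf
    exact chainRec_map T hf
end

section
/- If $T$ is an invertible continuous linear operator on a Banach space $X$ with continuous inverse, then $CR(T) = CR(T^{-1})$, i.e. a vector is chain recurrent for $T$ if and only if it is chain recurrent for $T^{-1}$. -/
lemma chainRecVec_symm {X : Type*} [NormedAddCommGroup X] [NormedSpace ℂ X]
    (T : X ≃L[ℂ] X) (f : X) (h : ChainRecVec (T : X →L[ℂ] X) f) :
    ChainRecVec (T.symm : X →L[ℂ] X) f := by
  intro δ hδ
  set C : ℝ := ‖(T.symm : X →L[ℂ] X)‖ + 1 with hC
  have hC0 : 0 < C := by positivity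
  obtain ⟨m, u, hm, hu0, hum, hstep⟩ := h (δ / C) (by positivity)
  refine ⟨m, fun k => u (m - k), hm, by simpa using hum, by simpa using hu0, ?_⟩
  intro k hk1 hkm
  have hml : m - (k - 1) = (m - k) + 1 := by omega
  have key : u (m - k) - (T.symm : X →L[ℂ] X) (u (m - (k - 1)))
      = (T.symm : X →L[ℂ] X) (T (u (m - k)) - u ((m - k) + 1)) := by
    rw [hml]
    simp [map_sub]
  have h1 : ‖u ((m - k) + 1) - T (u ((m - k) + 1 - 1))‖ < δ / C := by
    apply hstep _ (by omega) (by omega)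
  rw [Nat.add_sub_cancel] at h1
  calc ‖u (m - k) - (T.symm : X →L[ℂ] X) (u (m - (k - 1)))‖
      = ‖(T.symm : X →L[ℂ] X) (T (u (m - k)) - u ((m - k) + 1))‖ := by rw [key]
    _ ≤ ‖(T.symm : X →L[ℂ] X)‖ * ‖T (u (m - k)) - u ((m - k) + 1)‖ :=
        (T.symm : X →L[ℂ] X).le_opNorm _
    _ = ‖(T.symm : X →L[ℂ] X)‖ * ‖u ((m - k) + 1) - T (u (m - k))‖ := by
        rw [norm_sub_rev]
    _ ≤ ‖(T.symm : X →L[ℂ] X)‖ * (δ / C) := by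
        exact mul_le_mul_of_nonneg_left h1.le (norm_nonneg _)
    _ < C * (δ / C) := by
        apply mul_lt_mul_of_pos_right _ (by positivity)
        rw [hC]; linarith
    _ = δ := by field_simp

theorem stmt_3 {X : Type*} [NormedAddCommGroup X] [NormedSpace ℂ X] [CompleteSpace X]
    (T : X ≃L[ℂ] X) (f : X) :
    ChainRecVec (T : X →L[ℂ] X) f ↔ ChainRecVec (T.symm : X →L[ℂ] X) f := by
  constructor
  · exact chainRecVec_symm T f
  · intro h
    have := chainRecVec_symm T.symm f h
    simpa using this
end

section
/- If $T$ is a continuous linear operator on a Banach space $X$ such that $\|T f\| \ge c \|f\|$ for all $f \in X$ and some constant $c > 1$ (a proper dilation), then the only chain recurrent vector of $T$ is the zero vector, i.e. $CR(T) = \{0\}$. -/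
theorem stmt_4 {X : Type*} [NormedAddCommGroup X] [NormedSpace ℂ X] [CompleteSpace X]
    (T : X →L[ℂ] X) (c : ℝ) (hc : 1 < c) (hT : ∀ f : X, c * ‖f‖ ≤ ‖T f‖) :
    {f : X | ChainRecVec T f} = {0} := by
  ext f
  simp only [Set.mem_setOf_eq, Set.mem_singleton_iff]
  constructor
  · intro hf
    by_contra hne
    have hfpos : 0 < ‖f‖ := norm_pos_iff.mpr hne
    set ε : ℝ := (c - 1) * ‖f‖ / 2 with hε
    have hεpos : 0 < ε := by
      have : 0 < c - 1 := by linarith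
      positivity
    obtain ⟨m, u, hm, hu0, hum, hstep⟩ := hf ε hεpos
    have key : ∀ l, l ≤ m → ‖f‖ + l * ε ≤ ‖u l‖ := by
      intro l
      induction l with
      | zero => intro _; simp [hu0]
      | succ k ih =>
        intro hk
        have hk' : k ≤ m := Nat.le_of_succ_le hk
        have hIH := ih hk'
        have h1 : ‖u (k + 1) - T (u k)‖ < ε := by
          simpa using hstep (k + 1) (Nat.le_add_left 1 k) hk
        have h2 : c * ‖u k‖ ≤ ‖T (u k)‖ := hT (u k)
        have h3 : ‖T (u k)‖ - ‖u (k + 1)‖ ≤ ‖u (k + 1) - T (u k)‖ := by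
          have := norm_sub_norm_le (u (k + 1) - T (u k)) (u (k + 1))
          simpa using (abs_le.mp (abs_norm_sub_norm_le (T (u k)) (u (k + 1)))).2.trans
            (by rw [← norm_neg]; simp [neg_sub])
        have h4 : c * ‖u k‖ - ε ≤ ‖u (k + 1)‖ := by linarith
        have h5 : ‖f‖ + (↑k + 1) * ε ≤ c * (‖f‖ + k * ε) - ε := by
          have hkε : (0:ℝ) ≤ (k:ℝ) * ε := by positivity
          have : (c - 1) * ‖f‖ = 2 * ε := by rw [hε]; ring
          nlinarith [hεpos, hfpos]
        have h6 : c * (‖f‖ + k * ε) ≤ c * ‖u k‖ :=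
          mul_le_mul_of_nonneg_left hIH (by linarith)
        push_cast
        linarith
    have := key m le_rfl
    rw [hum] at this
    have : (m:ℝ) * ε ≤ 0 := by linarith
    have hm' : (1:ℝ) ≤ (m:ℝ) := by exact_mod_cast hm
    nlinarith
  · intro hf δ hδ
    refine ⟨1, fun _ => 0, le_refl 1, ?_, ?_, ?_⟩
    · simp [hf]
    · simp [hf]
    · intro l _ _
      simpa using hδ
end

section
/- For the bilateral weighted backward shift $B : \ell^2(\mathbb{Z}) \to \ell^2(\mathbb{Z})$ defined by $(Bf)(n) = \mu \cdot f(n+1)$ with a fixed scalar $|\mu| > 1$, the zero vector is the unique chain recurrent vector of $B$. -/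
open scoped ENNReal

theorem stmt_5 (μ : ℂ) (hμ : 1 < ‖μ‖)
    (B : lp (fun _ : ℤ => ℂ) 2 →L[ℂ] lp (fun _ : ℤ => ℂ) 2)
    (hB : ∀ (f : lp (fun _ : ℤ => ℂ) 2) (n : ℤ), (B f) n = μ * f (n + 1)) :
    {f : lp (fun _ : ℤ => ℂ) 2 | ChainRecVec B f} = {0} := by
  have hnorm : ∀ g : lp (fun _ : ℤ => ℂ) 2, ‖B g‖ = ‖μ‖ * ‖g‖ := by
    intro g
    have h2 : (0:ℝ) < (2:ℝ≥0∞).toReal := by norm_num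
    have h1 := lp.norm_rpow_eq_tsum h2 (B g)
    have h2' := lp.norm_rpow_eq_tsum h2 g
    have hre : ∑' n : ℤ, ‖g (n+1)‖ ^ ((2:ℝ≥0∞).toReal) = ∑' n : ℤ, ‖g n‖ ^ ((2:ℝ≥0∞).toReal) :=
      (Equiv.addRight (1:ℤ)).tsum_eq (fun n => ‖g n‖ ^ ((2:ℝ≥0∞).toReal))
    have key : ‖B g‖ ^ ((2:ℝ≥0∞).toReal) = (‖μ‖ * ‖g‖) ^ ((2:ℝ≥0∞).toReal) := by
      rw [h1]
      simp only [hB, norm_mul]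
      rw [Real.mul_rpow (norm_nonneg μ) (norm_nonneg g), h2', ← hre, ← tsum_mul_left]
      congr 1; ext n
      rw [Real.mul_rpow (norm_nonneg μ) (norm_nonneg _)]
    exact Real.rpow_left_injOn (x := (2:ℝ≥0∞).toReal) (by norm_num)
      (norm_nonneg _) (mul_nonneg (norm_nonneg _) (norm_nonneg _)) key
  ext f
  simp only [Set.mem_setOf_eq, Set.mem_singleton_iff]
  constructor
  · intro hf
    -- show ‖f‖ ≤ δ / (‖μ‖ - 1) for all δ > 0
    have hμ1 : (0:ℝ) < ‖μ‖ - 1 := by linarith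
    have hle : ∀ δ : ℝ, 0 < δ → ‖f‖ ≤ δ / (‖μ‖ - 1) := by
      intro δ hδ
      by_contra hcon
      push_neg at hcon
      set c : ℝ := δ / (‖μ‖ - 1) with hc
      have hcpos : 0 < c := div_pos hδ hμ1
      have h0 : c * (‖μ‖ - 1) = δ := div_mul_cancel₀ δ hμ1.ne'
      have hcd : ‖μ‖ * c = δ + c := by linear_combination h0
      obtain ⟨m, u, hm, hu0, hum, hch⟩ := hf δ hδ
      have step : ∀ l, l ≤ m → ‖μ‖ ^ l * (‖f‖ - c) ≤ ‖u l‖ - c := by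
        intro l
        induction l with
        | zero => intro _; simp [hu0]
        | succ k ih =>
          intro hk
          have ihk := ih (Nat.le_of_succ_le hk)
          have hchk := hch (k+1) (Nat.le_add_left 1 k) hk
          have hsub : ‖B (u k)‖ - ‖u (k+1)‖ ≤ ‖u (k+1) - B (u k)‖ := by
            have := norm_sub_norm_le (u (k+1) - B (u k)) (u (k+1))
            simp at this
            linarith [norm_sub_norm_le (B (u k)) (u (k+1)),
              norm_sub_rev (u (k+1)) (B (u k))]
          have hBn : ‖B (u k)‖ = ‖μ‖ * ‖u k‖ := hnorm (u k)
          have h1 : ‖μ‖ * ‖u k‖ - δ < ‖u (k+1)‖ := by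
            simp only [Nat.add_sub_cancel] at hchk
            linarith
          have h2 : ‖μ‖ * (‖μ‖ ^ k * (‖f‖ - c)) ≤ ‖μ‖ * (‖u k‖ - c) :=
            mul_le_mul_of_nonneg_left ihk (by linarith)
          have : ‖μ‖ ^ (k+1) * (‖f‖ - c) ≤ ‖μ‖ * ‖u k‖ - ‖μ‖ * c := by
            rw [pow_succ]
            nlinarith
          rw [hcd] at this
          linarith
      have hfin := step m le_rfl
      rw [hum] at hfin
      have hpow : 1 < ‖μ‖ ^ m := one_lt_pow₀ hμ (by omega)
      nlinarith [hfin, hcon]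
    have : ‖f‖ ≤ 0 := by
      by_contra h
      push_neg at h
      have := hle (‖f‖ * (‖μ‖ - 1) / 2) (by positivity)
      rw [le_div_iff₀ hμ1] at this
      nlinarith [mul_pos h hμ1]
    exact norm_eq_zero.mp (le_antisymm this (norm_nonneg f))
  · rintro rfl
    intro δ hδ
    exact ⟨1, fun _ => 0, le_refl 1, rfl, rfl, fun l _ _ => by simp only [map_zero, sub_zero, norm_zero]; exact hδ⟩
end

section
/- Let $V = \mathbb{Z} \cup \{(-k,j) : k \in \mathbb{N},\ 1 \le j \le k\}$ and let $B : \ell^2(V) \to \ell^2(V)$ be the weighted backward shift with $B e_n = \mu_1 e_{n-1}$ for $n \in \mathbb{Z}$, $B e_{(-k,j)} = \mu_2 e_{(-k,j-1)}$ for $1 < j \le k$, and $B e_{(-k,1)} = \mu_2 e_{-k}$, where $1 < |\mu_1| < |\mu_2|$. Then for every $n \in \mathbb{Z}$ and every $\delta > 0$ there exists a $\delta$-chain for $B$ from the unit vector $e_n$ to itself; consequently $e_n \in CR(B)$ for all $n \in \mathbb{Z}$. -/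
open scoped ENNReal

/-- Branch vertices `(-k, j)` of the tree, encoded by pairs `(k, j)` with `1 ≤ j ≤ k`. -/
abbrev TreeBranch : Type := {p : ℕ × ℕ // 1 ≤ p.2 ∧ p.2 ≤ p.1}

/-- The tree `V = ℤ ∪ {(-k,j) : k ∈ ℕ, 1 ≤ j ≤ k}`. -/
abbrev TreeV : Type := ℤ ⊕ TreeBranch

/-- The canonical unit vectors of `ℓ²(V)`. -/
noncomputable def eV (v : TreeV) : lp (fun _ : TreeV => ℂ) 2 := lp.single 2 v 1

/-- Branch unit vectors, extended by `0` outside the valid index range. -/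
noncomputable def ebr (k i : ℕ) : lp (fun _ : TreeV => ℂ) 2 :=
  if h : 1 ≤ i ∧ i ≤ k then eV (Sum.inr ⟨(k, i), h⟩) else 0

/-- The chain used in the proof. -/
noncomputable def chainU (μ1 μ2 ε : ℂ) (n : ℤ) (s j k T p : ℕ) (l : ℕ) :
    lp (fun _ : TreeV => ℂ) 2 :=
  if l < s then (μ1 ^ l) • eV (Sum.inl (n - l))
  else if l < T then
    (μ1 ^ l) • eV (Sum.inl (n - l)) + (ε * μ2 ^ (l - s)) • ebr k (j - (l - s))
  else if l = T then 0
  else μ1 ^ ((l : ℤ) - T - 1 - p) • eV (Sum.inl (n + p + T + 1 - l))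

theorem stmt_7 (μ1 μ2 : ℂ) (hμ1 : 1 < ‖μ1‖) (hμ12 : ‖μ1‖ < ‖μ2‖)
    (B : lp (fun _ : TreeV => ℂ) 2 →L[ℂ] lp (fun _ : TreeV => ℂ) 2)
    (hspine : ∀ n : ℤ, B (eV (Sum.inl n)) = μ1 • eV (Sum.inl (n - 1)))
    (hbranch : ∀ (k j : ℕ) (h1 : 2 ≤ j) (h2 : j ≤ k),
      B (eV (Sum.inr ⟨(k, j), ⟨show 1 ≤ j by omega, h2⟩⟩)) =
        μ2 • eV (Sum.inr ⟨(k, j - 1), ⟨show 1 ≤ j - 1 by omega, show j - 1 ≤ k by omega⟩⟩))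
    (hjoin : ∀ (k : ℕ) (hk : 1 ≤ k),
      B (eV (Sum.inr ⟨(k, 1), ⟨le_refl 1, hk⟩⟩)) = μ2 • eV (Sum.inl (-(k : ℤ)))) :
    ∀ n : ℤ, ∀ δ : ℝ, 0 < δ →
      IsDeltaChain B δ (eV (Sum.inl n)) (eV (Sum.inl n)) ∧ ChainRecVec B (eV (Sum.inl n)) := by
  have hμ1pos : (0:ℝ) < ‖μ1‖ := lt_trans one_pos hμ1
  have hμ2pos : (0:ℝ) < ‖μ2‖ := lt_trans hμ1pos hμ12
  have hμ1ne : μ1 ≠ 0 := by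
    intro h; rw [h, norm_zero] at hμ1; linarith
  have hμ2ne : μ2 ≠ 0 := by
    intro h; rw [h, norm_zero] at hμ2pos; linarith
  have hnorm : ∀ v : TreeV, ‖eV v‖ = 1 := by
    intro v
    rw [eV]
    simpa using lp.norm_single (p := 2) (E := fun _ : TreeV => ℂ) (by norm_num)
      (fun _ => (1 : ℂ)) v
  suffices H : ∀ n : ℤ, ∀ δ : ℝ, 0 < δ →
      IsDeltaChain B δ (eV (Sum.inl n)) (eV (Sum.inl n)) by
    exact fun n δ hδ => ⟨H n δ hδ, fun δ' hδ' => H n δ' hδ'⟩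
  intro n δ hδ
  -- parameters
  set s : ℕ := max n.toNat 1 with hsdef
  have hs1 : 1 ≤ s := le_max_right _ _
  have hsn : n ≤ (s : ℤ) := by
    refine le_trans (Int.self_le_toNat n) ?_
    exact_mod_cast le_max_left _ _
  obtain ⟨N, hN⟩ := exists_pow_lt_of_lt_one (x := δ / ‖μ1‖ ^ s) (y := ‖μ1‖ / ‖μ2‖)
    (by positivity) ((div_lt_one hμ2pos).mpr hμ12)
  set j : ℕ := max N 1 with hjdef
  have hj1 : 1 ≤ j := le_max_right _ _
  have hjlt : (‖μ1‖ / ‖μ2‖) ^ j < δ / ‖μ1‖ ^ s :=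
    lt_of_le_of_lt (pow_le_pow_of_le_one (by positivity)
      (le_of_lt ((div_lt_one hμ2pos).mpr hμ12)) (le_max_left _ _)) hN
  have hεlt : ‖μ1‖ ^ (s + j) / ‖μ2‖ ^ j < δ := by
    have h2 : ‖μ1‖ ^ s * (‖μ1‖ / ‖μ2‖) ^ j < δ := by
      have := mul_lt_mul_of_pos_left hjlt (show (0:ℝ) < ‖μ1‖ ^ s by positivity)
      rwa [mul_div_cancel₀ _ (by positivity : (‖μ1‖:ℝ) ^ s ≠ 0)] at this
    calc ‖μ1‖ ^ (s + j) / ‖μ2‖ ^ j = ‖μ1‖ ^ s * (‖μ1‖ / ‖μ2‖) ^ j := by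
          rw [div_pow, pow_add]; ring
      _ < δ := h2
  obtain ⟨p, hp⟩ := exists_pow_lt_of_lt_one hδ (inv_lt_one_of_one_lt₀ hμ1)
  set k : ℕ := (↑s + ↑j - n).toNat with hkdef
  have hk : (k : ℤ) = s + j - n := Int.toNat_of_nonneg (by omega)
  have hjk : j ≤ k := by omega
  have hk1 : 1 ≤ k := le_trans hj1 hjk
  set T : ℕ := s + j with hTdef
  set ε : ℂ := -(μ1 ^ T / μ2 ^ j) with hεdef
  have hεnorm : ‖ε‖ < δ := by
    rw [hεdef, norm_neg, norm_div, norm_pow, norm_pow]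
    exact hεlt
  -- branch vector facts
  have hebrnorm : ∀ i, 1 ≤ i → i ≤ k → ‖ebr k i‖ = 1 := by
    intro i h1 h2
    rw [ebr, dif_pos ⟨h1, h2⟩]
    exact hnorm _
  have hBbr : ∀ i : ℕ, 2 ≤ i → i ≤ k → B (ebr k i) = μ2 • ebr k (i - 1) := by
    intro i h2 hik
    rw [ebr, dif_pos ⟨by omega, hik⟩, ebr, dif_pos ⟨by omega, by omega⟩]
    exact hbranch k i h2 hik
  have hBbr1 : B (ebr k 1) = μ2 • eV (Sum.inl (-(k : ℤ))) := by
    rw [ebr, dif_pos ⟨le_refl 1, hk1⟩]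
    exact hjoin k hk1
  -- the chain
  refine ⟨T + 1 + p, fun l => chainU μ1 μ2 ε n s j k T p l, by omega, ?_, ?_, ?_⟩
  · simp only [chainU, if_pos (show 0 < s by omega)]
    simp
  · simp only [chainU, if_neg (show ¬ T + 1 + p < s by omega),
      if_neg (show ¬ T + 1 + p < T by omega), if_neg (show ¬ T + 1 + p = T by omega)]
    have e1 : ((T + 1 + p : ℕ) : ℤ) - T - 1 - p = 0 := by push_cast; ring
    have e2 : n + (p : ℤ) + T + 1 - ((T + 1 + p : ℕ) : ℤ) = n := by push_cast; ring
    rw [e1, e2, zpow_zero, one_smul]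
  · intro l hl1 hl2
    obtain ⟨l, rfl⟩ : ∃ l', l = l' + 1 := ⟨l - 1, by omega⟩
    simp only [Nat.add_sub_cancel, chainU]
    rcases lt_trichotomy (l + 1) s with hA | hA | hA
    · -- phase 1, exact
      rw [if_pos hA, if_pos (show l < s by omega), map_smul, hspine, smul_smul, ← pow_succ,
        show (n : ℤ) - ((l + 1 : ℕ) : ℤ) = n - (l : ℕ) - 1 by push_cast; ring,
        sub_self, norm_zero]
      exact hδ
    · -- the jump onto the branch
      rw [if_neg (show ¬ l + 1 < s by omega), if_pos (show l + 1 < T by omega),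
        if_pos (show l < s by omega), map_smul, hspine, smul_smul,
        show l + 1 - s = 0 by omega, pow_zero, mul_one, Nat.sub_zero,
        show (n : ℤ) - ((l + 1 : ℕ) : ℤ) = n - (l : ℕ) - 1 by push_cast; ring,
        ← pow_succ, add_sub_cancel_left, norm_smul, hebrnorm j hj1 hjk, mul_one]
      exact hεnorm
    · by_cases hB : l + 1 < T
      · -- phase 2, exact
        rw [if_neg (show ¬ l + 1 < s by omega), if_pos hB,
          if_neg (show ¬ l < s by omega), if_pos (show l < T by omega),
          map_add, map_smul, map_smul, hspine,
          hBbr (j - (l - s)) (by omega) (by omega), smul_smul, smul_smul,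
          show (n : ℤ) - ((l + 1 : ℕ) : ℤ) = n - (l : ℕ) - 1 by push_cast; ring,
          show μ1 ^ (l + 1) = μ1 ^ l * μ1 from pow_succ μ1 l,
          show ε * μ2 ^ (l + 1 - s) = ε * μ2 ^ (l - s) * μ2 by
            rw [mul_assoc, ← pow_succ, show l - s + 1 = l + 1 - s by omega],
          show j - (l + 1 - s) = j - (l - s) - 1 by omega,
          sub_self, norm_zero]
        exact hδ
      · by_cases hC : l + 1 = T
        · -- cancellation at the spine vertex -k
          rw [if_neg (show ¬ l + 1 < s by omega), if_neg (show ¬ l + 1 < T by omega),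
            if_pos hC, if_neg (show ¬ l < s by omega), if_pos (show l < T by omega),
            show j - (l - s) = 1 by omega, show l - s = j - 1 by omega,
            map_add, map_smul, map_smul, hspine, hBbr1, smul_smul, smul_smul,
            show (n : ℤ) - (l : ℕ) - 1 = -(k : ℤ) by omega,
            ← add_smul]
          have hco : μ1 ^ l * μ1 + ε * μ2 ^ (j - 1) * μ2 = 0 := by
            have h2 : μ2 ^ (j - 1) * μ2 = μ2 ^ j := by
              rw [← pow_succ, Nat.sub_add_cancel hj1]
            have h1 : μ1 ^ l * μ1 = μ1 ^ T := by
              rw [← pow_succ, hC]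
            rw [mul_assoc, h2, h1, hεdef]
            field_simp
            ring
          rw [hco, zero_smul]
          simpa using hδ
        · by_cases hD : l = T
          · -- the jump off zero
            rw [if_neg (show ¬ l + 1 < s by omega), if_neg (show ¬ l + 1 < T by omega),
              if_neg (show ¬ l + 1 = T by omega), if_neg (show ¬ l < s by omega),
              if_neg (show ¬ l < T by omega), if_pos hD, map_zero, sub_zero,
              show ((l + 1 : ℕ) : ℤ) - T - 1 - p = -(p : ℤ) by push_cast; omega,
              norm_smul, hnorm, mul_one, norm_zpow, zpow_neg, zpow_natCast, ← inv_pow]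
            exact hp
          · -- phase 3, exact
            rw [if_neg (show ¬ l + 1 < s by omega), if_neg (show ¬ l + 1 < T by omega),
              if_neg (show ¬ l + 1 = T by omega), if_neg (show ¬ l < s by omega),
              if_neg (show ¬ l < T by omega), if_neg hD, map_smul, hspine, smul_smul,
              ← zpow_add_one₀ hμ1ne,
              show ((l + 1 : ℕ) : ℤ) - T - 1 - p = (l : ℕ) - T - 1 - p + 1 by push_cast; ring,
              show n + (p : ℤ) + T + 1 - ((l + 1 : ℕ) : ℤ) = n + p + T + 1 - (l : ℕ) - 1 by
                push_cast; ring,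
              sub_self, norm_zero]
            exact hδ
end

section
/- Let $B_{\boldsymbol{\lambda}}$ be a unilateral weighted backward shift on $\ell^2(\mathbb{N})$ with nonzero bounded weights $(\lambda_n)$, $(B_{\boldsymbol{\lambda}} f)(n) = \lambda_{n+1} f(n+1)$. If $B_{\boldsymbol{\lambda}}$ admits a chain recurrent vector $f^*$ with $f^*(n_0+1) \ne 0$, then $\sum_{n=1}^{\infty} |\lambda_{n_0+1} \cdots \lambda_{n_0+n}| = \infty$. -/
open scoped ENNReal

lemma aux_mod_pred_of_ne {l m : ℕ} (hm : 1 ≤ m) (hl : 1 ≤ l) (h : l % m ≠ 0) :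
    (l - 1) % m = l % m - 1 := by
  have hd := Nat.mod_add_div' l m
  have hlt : l % m < m := Nat.mod_lt l hm
  have hr1 : 1 ≤ l % m := Nat.one_le_iff_ne_zero.mpr h
  have e : l - 1 = (l % m - 1) + l / m * m := by
    generalize l / m * m = t at hd ⊢
    omega
  rw [e, Nat.add_mul_mod_self_right, Nat.mod_eq_of_lt (by omega)]

lemma aux_mod_pred_of_eq {l m : ℕ} (hm : 1 ≤ m) (hl : 1 ≤ l) (h : l % m = 0) :
    (l - 1) % m = m - 1 := by
  have hd := Nat.mod_add_div' l m
  rw [h, zero_add] at hd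
  have hk : 1 ≤ l / m := by
    rcases Nat.eq_zero_or_pos (l / m) with h' | h'
    · rw [h', zero_mul] at hd; omega
    · exact h'
  obtain ⟨t, ht⟩ := Nat.exists_eq_add_of_le hk
  rw [ht] at hd
  have e : l - 1 = (m - 1) + t * m := by
    have h2 : (1 + t) * m = m + t * m := by ring
    rw [h2] at hd
    generalize t * m = s at hd ⊢
    omega
  rw [e, Nat.add_mul_mod_self_right, Nat.mod_eq_of_lt (by omega)]

/-- Concatenating a δ-chain from `f` to itself gives arbitrarily long δ-chains. -/
lemma aux_chain_concat {X : Type*} [NormedAddCommGroup X] [NormedSpace ℂ X]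
    (T : X →L[ℂ] X) (δ : ℝ) (f : X) (h : IsDeltaChain T δ f f) (N : ℕ) (hN : 1 ≤ N) :
    ∃ (m : ℕ) (u : ℕ → X), N ≤ m ∧ u 0 = f ∧ u m = f ∧
      ∀ l, 1 ≤ l → l ≤ m → ‖u l - T (u (l - 1))‖ < δ := by
  obtain ⟨m, u, hm, h0, hmf, hstep⟩ := h
  refine ⟨N * m, fun l => u (l % m), ?_, ?_, ?_, ?_⟩
  · calc N = N * 1 := (mul_one N).symm
      _ ≤ N * m := Nat.mul_le_mul_left N hm
  · simpa [Nat.zero_mod] using h0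
  · simpa [Nat.mul_mod_left] using h0
  · intro l hl hlm
    by_cases hr : l % m = 0
    · simp only [hr, aux_mod_pred_of_eq hm hl hr, h0, ← hmf]
      exact hstep m hm le_rfl
    · simp only [aux_mod_pred_of_ne hm hl hr]
      exact hstep (l % m) (Nat.one_le_iff_ne_zero.mpr hr)
        (le_of_lt (Nat.mod_lt l hm))

theorem stmt_13 (lam : ℕ → ℂ) (hne : ∀ n, 1 ≤ n → lam n ≠ 0)
    (hbdd : ∃ C : ℝ, ∀ n, ‖lam n‖ ≤ C)
    (B : lp (fun _ : ℕ => ℂ) 2 →L[ℂ] lp (fun _ : ℕ => ℂ) 2)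
    (hB : ∀ (f : lp (fun _ : ℕ => ℂ) 2) (n : ℕ), (B f) n = lam (n + 1) * f (n + 1))
    (n0 : ℕ) (fstar : lp (fun _ : ℕ => ℂ) 2)
    (hCR : ChainRecVec B fstar) (hne0 : fstar (n0 + 1) ≠ 0) :
    ¬ Summable fun n : ℕ => ‖∏ i ∈ Finset.Icc (n0 + 1) (n0 + n + 1), lam i‖ := by
  intro hsum
  have h2 : (2 : ℝ≥0∞) ≠ 0 := by norm_num
  -- the reduced weight products
  set q : ℕ → ℝ := fun k => ∏ i ∈ Finset.Icc (n0 + 2) (n0 + 1 + k), ‖lam i‖ with hq_def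
  have hq0 : q 0 = 1 := by
    simp [hq_def, Finset.Icc_eq_empty (by omega : ¬ (n0 + 2 ≤ n0 + 1 + 0))]
  have hq_nonneg : ∀ k, 0 ≤ q k := fun k =>
    Finset.prod_nonneg fun i _ => norm_nonneg _
  have hq_succ : ∀ k, q (k + 1) = q k * ‖lam (n0 + 1 + k + 1)‖ := by
    intro k
    have h : n0 + 1 + (k + 1) = (n0 + 1 + k) + 1 := rfl
    rw [hq_def]
    simp only [h]
    exact Finset.prod_Icc_succ_top (by omega) _
  have hlam_ne : ‖lam (n0 + 1)‖ ≠ 0 :=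
    norm_ne_zero_iff.mpr (hne (n0 + 1) (by omega))
  -- splitting off the first factor
  have hsplit : ∀ n : ℕ,
      ‖∏ i ∈ Finset.Icc (n0 + 1) (n0 + n + 1), lam i‖ = ‖lam (n0 + 1)‖ * q n := by
    intro n
    rw [norm_prod]
    have e : n0 + n + 1 = n0 + 1 + n := by omega
    rw [e, ← Finset.Ico_add_one_right_eq_Icc,
      Finset.prod_eq_prod_Ico_succ_bot (by omega : n0 + 1 < n0 + 1 + n + 1),
      Finset.Ico_add_one_right_eq_Icc]
  have hq_sum : Summable q := by
    refine (hsum.mul_left (‖lam (n0 + 1)‖⁻¹)).congr fun n => ?_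
    rw [hsplit n, ← mul_assoc, inv_mul_cancel₀ hlam_ne, one_mul]
  set S : ℝ := ∑' k, q k with hS_def
  have hS0 : 0 ≤ S := tsum_nonneg hq_nonneg
  set ε : ℝ := ‖fstar (n0 + 1)‖ with hε_def
  have hε : 0 < ε := by
    rw [hε_def]; exact norm_pos_iff.mpr hne0
  set δ : ℝ := ε / (2 * (1 + S)) with hδ_def
  have hδ : 0 < δ := by positivity
  -- eventually q m * ‖fstar‖ < ε / 2
  have hq_tend : Filter.Tendsto q Filter.atTop (nhds 0) := hq_sum.tendsto_atTop_zero
  have htend : Filter.Tendsto (fun n => q n * ‖fstar‖) Filter.atTop (nhds 0) := by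
    simpa using hq_tend.mul_const ‖fstar‖
  obtain ⟨N, hN⟩ := Filter.eventually_atTop.mp
    (htend.eventually (gt_mem_nhds (by positivity : (0:ℝ) < ε / 2)))
  -- a long chain
  obtain ⟨m, u, hm, hu0, hum, hstep⟩ :=
    aux_chain_concat B δ fstar (hCR δ hδ) (max N 1) (le_max_right _ _)
  have hmN : N ≤ m := le_trans (le_max_left _ _) hm
  -- coordinatewise recurrence bound
  have hcoord : ∀ (g h : lp (fun _ : ℕ => ℂ) 2) (n : ℕ),
      ‖g n - lam (n + 1) * h (n + 1)‖ ≤ ‖g - B h‖ := by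
    intro g h n
    have := lp.norm_apply_le_norm h2 (g - B h) n
    rwa [lp.coeFn_sub, Pi.sub_apply, hB] at this
  -- main induction
  have key : ∀ d, d ≤ m →
      ‖u m (n0 + 1)‖ ≤ q d * ‖u (m - d) (n0 + 1 + d)‖
        + δ * ∑ k ∈ Finset.range d, q k := by
    intro d
    induction d with
    | zero =>
      intro _
      simp [hq0]
    | succ d ih =>
      intro hd
      have hd' : d ≤ m := by omega
      have hsub : m - d - 1 = m - (d + 1) := by omega
      have hstep' : ‖u (m - d) (n0 + 1 + d)
          - lam (n0 + 1 + d + 1) * u (m - (d + 1)) (n0 + 1 + d + 1)‖ < δ := by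
        have h1 := hstep (m - d) (by omega) (by omega)
        rw [hsub] at h1
        exact lt_of_le_of_lt (hcoord (u (m - d)) (u (m - (d + 1))) (n0 + 1 + d)) h1
      have hbound : ‖u (m - d) (n0 + 1 + d)‖
          ≤ ‖lam (n0 + 1 + d + 1)‖ * ‖u (m - (d + 1)) (n0 + 1 + d + 1)‖ + δ := by
        calc ‖u (m - d) (n0 + 1 + d)‖
            ≤ ‖u (m - d) (n0 + 1 + d)
                - lam (n0 + 1 + d + 1) * u (m - (d + 1)) (n0 + 1 + d + 1)‖
              + ‖lam (n0 + 1 + d + 1) * u (m - (d + 1)) (n0 + 1 + d + 1)‖ := by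
              simpa using norm_sub_le_norm_sub_add_norm_sub
                (u (m - d) (n0 + 1 + d))
                (lam (n0 + 1 + d + 1) * u (m - (d + 1)) (n0 + 1 + d + 1)) 0
              |>.trans_eq (by simp)
          _ ≤ ‖lam (n0 + 1 + d + 1)‖ * ‖u (m - (d + 1)) (n0 + 1 + d + 1)‖ + δ := by
              rw [norm_mul]
              linarith [hstep'.le]
      calc ‖u m (n0 + 1)‖
          ≤ q d * ‖u (m - d) (n0 + 1 + d)‖ + δ * ∑ k ∈ Finset.range d, q k := ih hd'
        _ ≤ q d * (‖lam (n0 + 1 + d + 1)‖ * ‖u (m - (d + 1)) (n0 + 1 + d + 1)‖ + δ)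
              + δ * ∑ k ∈ Finset.range d, q k := by
            have := mul_le_mul_of_nonneg_left hbound (hq_nonneg d)
            linarith
        _ = q (d + 1) * ‖u (m - (d + 1)) (n0 + 1 + (d + 1))‖
              + δ * ∑ k ∈ Finset.range (d + 1), q k := by
            rw [hq_succ d, Finset.sum_range_succ]
            have e : n0 + 1 + (d + 1) = n0 + 1 + d + 1 := by omega
            rw [e]; ring
  have fin := key m le_rfl
  rw [hum, Nat.sub_self, hu0] at fin
  have hle1 : ‖fstar (n0 + 1 + m)‖ ≤ ‖fstar‖ := lp.norm_apply_le_norm h2 fstar _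
  have hle2 : ∑ k ∈ Finset.range m, q k ≤ S :=
    Summable.sum_le_tsum (Finset.range m) (fun i _ => hq_nonneg i) hq_sum
  have h3 : q m * ‖fstar‖ < ε / 2 := hN m hmN
  have h4 : δ * S ≤ ε / 2 := by
    rw [hδ_def, div_mul_eq_mul_div]
    rw [div_le_div_iff₀ (by positivity) (by norm_num)]
    nlinarith
  have h5 : q m * ‖fstar (n0 + 1 + m)‖ ≤ q m * ‖fstar‖ :=
    mul_le_mul_of_nonneg_left hle1 (hq_nonneg m)
  have h6 : δ * ∑ k ∈ Finset.range m, q k ≤ δ * S :=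
    mul_le_mul_of_nonneg_left hle2 hδ.le
  linarith
end

section
/- Let $B_{\boldsymbol{\lambda}}$ be a bilateral weighted backward shift on $\ell^2(\mathbb{Z})$ with nonzero weights bounded above and away from zero, $(B_{\boldsymbol{\lambda}} f)(n) = \lambda_{n+1} f(n+1)$. If $B_{\boldsymbol{\lambda}}$ admits a chain recurrent vector $f^*$ with $f^*(n_0+1) \ne 0$, then $\sum_{n=1}^{\infty} |\lambda_{n_0-(n-1)} \cdots \lambda_{n_0}|^{-1} = \infty$. -/
open scoped ENNReal

/-- Modular arithmetic helper for concatenating chains. -/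
lemma aux_mod_step (m l : ℕ) (hm : 1 ≤ m) (hl : 1 ≤ l) :
    (l % m = 0 ∧ (l - 1) % m = m - 1) ∨
    (1 ≤ l % m ∧ (l - 1) % m = l % m - 1) := by
  rcases Nat.eq_zero_or_pos (l % m) with h0 | hpos
  · left
    refine ⟨h0, ?_⟩
    obtain ⟨q, hq⟩ : m ∣ l := Nat.dvd_of_mod_eq_zero h0
    have hq1 : 1 ≤ q := by
      rcases Nat.eq_zero_or_pos q with rfl | h
      · simp at hq; omega
      · exact h
    have hA : m * q = m * (q - 1) + m := by
      calc m * q = m * ((q - 1) + 1) := by rw [Nat.sub_add_cancel hq1]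
        _ = m * (q - 1) + m := by ring
    rw [hq, hA]
    have h' : m * (q - 1) + m - 1 = m * (q - 1) + (m - 1) := by
      generalize m * (q - 1) = t
      omega
    rw [h', Nat.mul_add_mod, Nat.mod_eq_of_lt (by omega)]
  · right
    refine ⟨hpos, ?_⟩
    have hlt : l % m < m := Nat.mod_lt _ (by omega)
    have hdm : m * (l / m) + l % m = l := Nat.div_add_mod l m
    have h' : l - 1 = m * (l / m) + (l % m - 1) := by
      revert hdm hpos
      generalize m * (l / m) = t
      generalize l % m = r
      intro hdm hpos
      omega
    rw [h', Nat.mul_add_mod, Nat.mod_eq_of_lt (by omega)]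

theorem stmt_14 (lam : ℤ → ℂ)
    (hbdd : ∃ c C : ℝ, 0 < c ∧ ∀ n : ℤ, c ≤ ‖lam n‖ ∧ ‖lam n‖ ≤ C)
    (B : lp (fun _ : ℤ => ℂ) 2 →L[ℂ] lp (fun _ : ℤ => ℂ) 2)
    (hB : ∀ (f : lp (fun _ : ℤ => ℂ) 2) (n : ℤ), (B f) n = lam (n + 1) * f (n + 1))
    (n0 : ℤ) (fstar : lp (fun _ : ℤ => ℂ) 2)
    (hCR : ChainRecVec B fstar) (hne0 : fstar (n0 + 1) ≠ 0) :
    ¬ Summable fun n : ℕ => ‖∏ i ∈ Finset.Icc (n0 - (n : ℤ)) n0, lam i‖⁻¹ := by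
  intro hsum
  obtain ⟨c, C, hc, hbd⟩ := hbdd
  have hlam_ne : ∀ i : ℤ, lam i ≠ 0 := by
    intro i h
    have := (hbd i).1
    rw [h, norm_zero] at this
    linarith
  set a : ℝ := ‖fstar (n0 + 1)‖ with ha_def
  have ha : 0 < a := norm_pos_iff.mpr hne0
  set h : ℕ → ℝ := fun n => ‖∏ i ∈ Finset.Icc (n0 - (n : ℤ)) n0, lam i‖⁻¹ with hh
  have hpos : ∀ n, 0 < h n := by
    intro n
    have : (∏ i ∈ Finset.Icc (n0 - (n : ℤ)) n0, lam i) ≠ 0 :=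
      Finset.prod_ne_zero_iff.mpr fun i _ => hlam_ne i
    exact inv_pos.mpr (norm_pos_iff.mpr this)
  set P : ℕ → ℂ := fun l => ∏ i ∈ Finset.Icc (n0 + 2 - (l : ℤ)) (n0 + 1), lam i with hPdef
  have hP0 : P 0 = 1 := by
    simp only [hPdef]
    rw [Finset.Icc_eq_empty (by push_cast; omega), Finset.prod_empty]
  have hP1 : P 1 = lam (n0 + 1) := by
    simp only [hPdef]
    have : n0 + 2 - ((1 : ℕ) : ℤ) = n0 + 1 := by push_cast; ring
    rw [this, Finset.Icc_self, Finset.prod_singleton]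
  have hPrec : ∀ l : ℕ, P (l + 1) = lam (n0 + 1 - l) * P l := by
    intro l
    simp only [hPdef]
    have hset : Finset.Icc (n0 + 2 - ((l : ℕ) + 1 : ℕ) : ℤ) (n0 + 1)
        = insert (n0 + 1 - l) (Finset.Icc (n0 + 2 - (l : ℤ)) (n0 + 1)) := by
      ext i
      simp only [Finset.mem_Icc, Finset.mem_insert]
      push_cast
      omega
    rw [hset, Finset.prod_insert (by simp only [Finset.mem_Icc]; omega)]
  have hPne : ∀ l, P l ≠ 0 := by
    intro l
    exact Finset.prod_ne_zero_iff.mpr fun i _ => hlam_ne i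
  have hPnorm : ∀ n : ℕ, ‖P (n + 2)‖ = ‖lam (n0 + 1)‖ * (h n)⁻¹ := by
    intro n
    have hset : Finset.Icc (n0 + 2 - ((n : ℕ) + 2 : ℕ) : ℤ) (n0 + 1)
        = insert (n0 + 1) (Finset.Icc (n0 - (n : ℤ)) n0) := by
      ext i
      simp only [Finset.mem_Icc, Finset.mem_insert]
      push_cast
      omega
    simp only [hPdef]
    rw [hset, Finset.prod_insert (by simp only [Finset.mem_Icc]; omega), norm_mul]
    simp only [hh, inv_inv]
  have hS0 : 0 ≤ ∑' n, h n := tsum_nonneg fun n => (hpos n).le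
  set S : ℝ := ∑' n, h n with hSdef
  set K : ℝ := c⁻¹ * (1 + S) with hKdef
  have hK : 0 < K := mul_pos (inv_pos.mpr hc) (by linarith)
  -- partial sums of ‖P j‖⁻¹ are bounded by K
  have hP1inv : ‖P 1‖⁻¹ ≤ c⁻¹ := by
    rw [hP1]
    exact inv_anti₀ hc (hbd (n0 + 1)).1
  have hPn2inv : ∀ n : ℕ, ‖P (n + 2)‖⁻¹ ≤ c⁻¹ * h n := by
    intro n
    rw [hPnorm n, mul_inv, inv_inv]
    exact mul_le_mul_of_nonneg_right (inv_anti₀ hc (hbd (n0 + 1)).1) (hpos n).le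
  have hKb' : ∀ l : ℕ, ∑ j ∈ Finset.Icc 1 (l + 1), ‖P j‖⁻¹
      ≤ c⁻¹ + c⁻¹ * ∑ n ∈ Finset.range l, h n := by
    intro l
    induction l with
    | zero => simpa using hP1inv
    | succ l ih =>
      rw [Finset.sum_Icc_succ_top (by omega), Finset.sum_range_succ, mul_add]
      have := hPn2inv l
      calc (∑ j ∈ Finset.Icc 1 (l + 1), ‖P j‖⁻¹) + ‖P (l + 1 + 1)‖⁻¹
          ≤ (c⁻¹ + c⁻¹ * ∑ n ∈ Finset.range l, h n) + c⁻¹ * h l := by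
            exact add_le_add ih (by exact_mod_cast hPn2inv l)
        _ = c⁻¹ + (c⁻¹ * ∑ n ∈ Finset.range l, h n + c⁻¹ * h l) := by ring
  have hKb : ∀ l : ℕ, ∑ j ∈ Finset.Icc 1 l, ‖P j‖⁻¹ ≤ K := by
    intro l
    rcases l with _ | l'
    · simpa using hK.le
    · calc ∑ j ∈ Finset.Icc 1 (l' + 1), ‖P j‖⁻¹
          ≤ c⁻¹ + c⁻¹ * ∑ n ∈ Finset.range l', h n := hKb' l'
        _ ≤ c⁻¹ + c⁻¹ * S := by
            have : ∑ n ∈ Finset.range l', h n ≤ S :=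
              Summable.sum_le_tsum _ (fun n _ => (hpos n).le) hsum
            nlinarith [inv_pos.mpr hc]
        _ = K := by rw [hKdef]; ring
  -- choose δ and get a chain
  set δ : ℝ := a / (2 * (K + 1)) with hδdef
  have hδ : 0 < δ := div_pos ha (by linarith)
  obtain ⟨m, u, hm, hu0, hum, hustep⟩ := hCR δ hδ
  have hδK : δ * K ≤ a / 2 := by
    rw [hδdef]
    rw [div_mul_eq_mul_div, div_le_div_iff₀ (by linarith) (by norm_num)]
    nlinarith
  -- choose k large
  have hhto : Filter.Tendsto h Filter.atTop (nhds 0) := hsum.tendsto_atTop_zero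
  have htt : Filter.Tendsto (fun k : ℕ => k * m - 2) Filter.atTop Filter.atTop := by
    apply Filter.tendsto_atTop_atTop.mpr
    intro b
    refine ⟨b + 2, fun k hk => ?_⟩
    have : k ≤ k * m := Nat.le_mul_of_pos_right k (by omega)
    omega
  have ev1 : ∀ᶠ k : ℕ in Filter.atTop, h (k * m - 2) < c :=
    (hhto.comp htt).eventually_lt_const hc
  have hsum2 : Summable (fun i : ℤ => ‖fstar i‖ ^ (2 : ℝ≥0∞).toReal) :=
    (lp.memℓp fstar).summable (by norm_num)
  have hinj : Function.Injective (fun k : ℕ => (n0 + 1 - (k * m : ℕ) : ℤ)) := by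
    intro x y hxy
    simp only at hxy
    have hxy' : ((x * m : ℕ) : ℤ) = ((y * m : ℕ) : ℤ) := by omega
    have : x * m = y * m := by exact_mod_cast hxy'
    exact Nat.eq_of_mul_eq_mul_right (by omega) this
  have htc : Filter.Tendsto (fun k : ℕ => (n0 + 1 - (k * m : ℕ) : ℤ))
      Filter.atTop Filter.cofinite := by
    rw [← Nat.cofinite_eq_atTop]
    exact hinj.tendsto_cofinite
  have ev2 : ∀ᶠ k : ℕ in Filter.atTop,
      ‖fstar (n0 + 1 - (k * m : ℕ) : ℤ)‖ < a / 2 := by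
    have h1 : Filter.Tendsto (fun k : ℕ => ‖fstar (n0 + 1 - (k * m : ℕ) : ℤ)‖ ^ (2 : ℝ≥0∞).toReal)
        Filter.atTop (nhds 0) := (hsum2.tendsto_cofinite_zero).comp htc
    have h2 := h1.eventually_lt_const (show (0:ℝ) < (a / 2) ^ (2 : ℝ≥0∞).toReal by
      exact Real.rpow_pos_of_pos (by linarith) _)
    filter_upwards [h2] with k hk
    by_contra hcon
    push_neg at hcon
    have hmono : (a / 2) ^ (2 : ℝ≥0∞).toReal
        ≤ ‖fstar (n0 + 1 - (k * m : ℕ) : ℤ)‖ ^ (2 : ℝ≥0∞).toReal :=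
      Real.rpow_le_rpow (by linarith) hcon ENNReal.toReal_nonneg
    linarith
  obtain ⟨k, ⟨hk1, hk2⟩, hk3⟩ := ((ev1.and ev2).and (Filter.eventually_ge_atTop 2)).exists
  set N : ℕ := k * m with hNdef
  have hN2 : 2 ≤ N := le_trans (by omega) (Nat.mul_le_mul hk3 hm)
  -- concatenated chain
  set w : ℕ → lp (fun _ : ℤ => ℂ) 2 := fun j => u (j % m) with hwdef
  have hw0 : w 0 = fstar := by simp only [hwdef, Nat.zero_mod]; exact hu0
  have hwN : w N = fstar := by
    simp only [hwdef, hNdef, Nat.mul_mod_left]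
    exact hu0
  have hwstep : ∀ l, 1 ≤ l → l ≤ N → ‖w l - B (w (l - 1))‖ < δ := by
    intro l h1 _
    simp only [hwdef]
    rcases aux_mod_step m l hm h1 with ⟨h0, hpred⟩ | ⟨hr1, hpred⟩
    · rw [h0, hpred, hu0, ← hum]
      have := hustep m hm le_rfl
      exact this
    · rw [hpred]
      exact hustep (l % m) hr1 (Nat.mod_lt _ (by omega)).le
  -- the key inductive estimate
  have key : ∀ l, l ≤ N →
      ‖(w l) (n0 + 1 - (l : ℤ)) / P l - fstar (n0 + 1)‖
        ≤ δ * ∑ j ∈ Finset.Icc 1 l, ‖P j‖⁻¹ := by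
    intro l
    induction l with
    | zero =>
      intro _
      simp [hw0, hP0]
    | succ l ih =>
      intro hlN
      have ih' := ih (by omega)
      have hstep := hwstep (l + 1) (by omega) hlN
      -- coordinate error
      have hidx : (n0 - (l : ℤ)) + 1 = n0 + 1 - (l : ℤ) := by ring
      have hcoord : ‖(w (l + 1)) (n0 - (l : ℤ))
          - lam (n0 + 1 - l) * (w l) (n0 + 1 - (l : ℤ))‖ < δ := by
        have h1 : (w (l + 1) - B (w l)) (n0 - (l : ℤ))
            = (w (l + 1)) (n0 - (l : ℤ)) - (B (w l)) (n0 - (l : ℤ)) := by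
          rw [lp.coeFn_sub]; rfl
        have h2 := lp.norm_apply_le_norm two_ne_zero (w (l + 1) - B (w l)) (n0 - (l : ℤ))
        rw [h1, hB (w l) (n0 - (l : ℤ)), hidx] at h2
        have h3 : w (l + 1 - 1) = w l := by norm_num
        rw [h3] at hstep
        exact lt_of_le_of_lt h2 hstep
      set g : ℂ := (w l) (n0 + 1 - (l : ℤ)) with hg
      set z : ℂ := (w (l + 1)) (n0 - (l : ℤ)) with hz
      have hzidx : (w (l + 1)) (n0 + 1 - ((l + 1 : ℕ) : ℤ)) = z := by
        have : (n0 + 1 - ((l + 1 : ℕ) : ℤ)) = n0 - (l : ℤ) := by push_cast; ring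
        rw [this]
      set e : ℂ := z - lam (n0 + 1 - l) * g with he
      have halg : z / P (l + 1) - fstar (n0 + 1)
          = (g / P l - fstar (n0 + 1)) + e / P (l + 1) := by
        rw [he, hPrec l]
        have h1 : lam (n0 + 1 - l) ≠ 0 := hlam_ne _
        have h2 : P l ≠ 0 := hPne l
        field_simp
        ring
      rw [hzidx, halg]
      have hbound : ‖e / P (l + 1)‖ ≤ δ * ‖P (l + 1)‖⁻¹ := by
        rw [norm_div, div_eq_mul_inv]
        exact mul_le_mul_of_nonneg_right hcoord.le (inv_nonneg.mpr (norm_nonneg _))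
      calc ‖(g / P l - fstar (n0 + 1)) + e / P (l + 1)‖
          ≤ ‖g / P l - fstar (n0 + 1)‖ + ‖e / P (l + 1)‖ := norm_add_le _ _
        _ ≤ δ * (∑ j ∈ Finset.Icc 1 l, ‖P j‖⁻¹) + δ * ‖P (l + 1)‖⁻¹ :=
            add_le_add ih' hbound
        _ = δ * ∑ j ∈ Finset.Icc 1 (l + 1), ‖P j‖⁻¹ := by
            rw [Finset.sum_Icc_succ_top (by omega)]; ring
  -- put it together
  have hfin := key N le_rfl
  rw [hwN] at hfin
  have hfin2 : ‖fstar (n0 + 1 - (N : ℤ)) / P N - fstar (n0 + 1)‖ ≤ a / 2 := by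
    calc ‖fstar (n0 + 1 - (N : ℤ)) / P N - fstar (n0 + 1)‖
        ≤ δ * ∑ j ∈ Finset.Icc 1 N, ‖P j‖⁻¹ := hfin
      _ ≤ δ * K := mul_le_mul_of_nonneg_left (hKb N) hδ.le
      _ ≤ a / 2 := hδK
  have hx : a / 2 ≤ ‖fstar (n0 + 1 - (N : ℤ)) / P N‖ := by
    have h1 := norm_sub_norm_le (fstar (n0 + 1)) (fstar (n0 + 1 - (N : ℤ)) / P N)
    rw [norm_sub_rev] at h1
    linarith [hfin2]
  have hPN1 : 1 ≤ ‖P N‖ := by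
    have hN' : N = (N - 2) + 2 := by omega
    have hhc : h (N - 2) < c := hk1
    rw [hN', hPnorm (N - 2)]
    have h1 : c⁻¹ ≤ (h (N - 2))⁻¹ := inv_anti₀ (hpos _) hhc.le
    have h2 : c ≤ ‖lam (n0 + 1)‖ := (hbd (n0 + 1)).1
    calc (1:ℝ) = c * c⁻¹ := (mul_inv_cancel₀ hc.ne').symm
      _ ≤ ‖lam (n0 + 1)‖ * (h (N - 2))⁻¹ :=
          mul_le_mul h2 h1 (inv_pos.mpr hc).le (norm_nonneg _)
  have hxle : ‖fstar (n0 + 1 - (N : ℤ)) / P N‖ ≤ ‖fstar (n0 + 1 - (N : ℤ))‖ := by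
    rw [norm_div]
    exact div_le_self (norm_nonneg _) hPN1
  have : a / 2 ≤ ‖fstar (n0 + 1 - (N : ℤ))‖ := le_trans hx hxle
  have hlt : ‖fstar (n0 + 1 - (N : ℤ))‖ < a / 2 := by
    have := hk2
    simpa [hNdef] using hk2
  linarith
end

section
/- Let $B_{\boldsymbol{\lambda}}$ be a unilateral weighted backward shift on $\ell^2(\mathbb{N})$ with nonzero bounded weights. Then $B_{\boldsymbol{\lambda}}$ is a chain recurrent operator if and only if it admits a nonzero chain recurrent vector, if and only if $\sum_{n=1}^{\infty} |\lambda_1 \cdots \lambda_n| = \infty$. -/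
open scoped ENNReal

set_option linter.unusedSectionVars false
set_option linter.deprecated false


local notation "X2" => lp (fun _ : ℕ => ℂ) 2

noncomputable def sgl (k : ℕ) (c : ℂ) : X2 := lp.single 2 k c

lemma sgl_apply (k : ℕ) (c : ℂ) (n : ℕ) : (sgl k c) n = if n = k then c else 0 := by
  by_cases h : n = k
  · subst h; simp [sgl, lp.single_apply_self]
  · rw [if_neg h]
    exact lp.single_apply_ne (E := fun _ : ℕ => ℂ) 2 k c h

lemma norm_sgl (k : ℕ) (c : ℂ) : ‖sgl k c‖ = ‖c‖ :=
  lp.norm_single (E := fun _ : ℕ => ℂ) (p := 2) (by norm_num) k c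

lemma coord_le_norm (f : X2) (n : ℕ) : ‖f n‖ ≤ ‖f‖ :=
  lp.norm_apply_le_norm (by norm_num) f n

section Shift
variable {lam : ℕ → ℂ}
  {B : lp (fun _ : ℕ => ℂ) 2 →L[ℂ] lp (fun _ : ℕ => ℂ) 2}
  (hB : ∀ (f : lp (fun _ : ℕ => ℂ) 2) (n : ℕ), (B f) n = lam (n + 1) * f (n + 1))

include hB

lemma B_sgl_succ (k : ℕ) (c : ℂ) : B (sgl (k + 1) c) = sgl k (lam (k + 1) * c) := by
  apply lp.ext; funext n
  rw [show ((B (sgl (k+1) c)) : ∀ _ : ℕ, ℂ) n = (B (sgl (k+1) c)) n from rfl, hB]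
  rw [show ((sgl k (lam (k+1) * c)) : ∀ _ : ℕ, ℂ) n = (sgl k (lam (k+1)*c)) n from rfl]
  rw [sgl_apply, sgl_apply]
  by_cases h : n = k
  · simp [h]
  · have : ¬ (n + 1 = k + 1) := by omega
    simp [h, this]

lemma B_sgl_zero (c : ℂ) : B (sgl 0 c) = 0 := by
  apply lp.ext; funext n
  rw [show ((B (sgl 0 c)) : ∀ _ : ℕ, ℂ) n = (B (sgl 0 c)) n from rfl, hB]
  rw [sgl_apply]
  simp

lemma Bpow_sgl (k j : ℕ) (c : ℂ) :
    (B ^ j) (sgl (k + j) c) = sgl k ((∏ i ∈ Finset.Icc (k + 1) (k + j), lam i) * c) := by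
  induction j generalizing c with
  | zero => simp
  | succ n ih =>
    rw [pow_succ, ContinuousLinearMap.mul_apply]
    rw [show k + (n + 1) = (k + n) + 1 from rfl, B_sgl_succ hB, ih]
    congr 1
    rw [Finset.prod_Icc_succ_top (by omega)]
    ring

lemma Bpow_sgl_zero (k j : ℕ) (c : ℂ) (h : k < j) : (B ^ j) (sgl k c) = 0 := by
  have h1 : (B ^ (k + 1)) (sgl k c) = 0 := by
    rw [pow_succ', ContinuousLinearMap.mul_apply]
    have h2 := Bpow_sgl hB 0 k c
    simp only [Nat.zero_add] at h2
    rw [h2, B_sgl_zero hB]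
  have : B ^ j = B ^ (j - (k + 1)) * B ^ (k + 1) := by
    rw [← pow_add]; congr 1; omega
  rw [this, ContinuousLinearMap.mul_apply, h1, map_zero]

end Shift

open Finset

section Prods
variable {lam : ℕ → ℂ} (hne : ∀ n, 1 ≤ n → lam n ≠ 0)

noncomputable def cprod (lam : ℕ → ℂ) (n : ℕ) : ℂ := ∏ i ∈ Finset.Icc 1 n, lam i
noncomputable def prodd (lam : ℕ → ℂ) (k j : ℕ) : ℂ := ∏ i ∈ Finset.Icc (k + 1) (k + j), lam i

lemma cprod_split (k j : ℕ) : cprod lam (k + j) = cprod lam k * prodd lam k j := by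
  unfold cprod prodd
  rw [show Finset.Icc 1 k = Finset.Ioc 0 k by rw [← Finset.Icc_add_one_left_eq_Ioc, zero_add],
      show Finset.Icc (k+1) (k+j) = Finset.Ioc k (k+j) by rw [← Finset.Icc_add_one_left_eq_Ioc],
      show Finset.Icc 1 (k+j) = Finset.Ioc 0 (k+j) by rw [← Finset.Icc_add_one_left_eq_Ioc, zero_add]]
  exact (Finset.prod_Ioc_consecutive _ (Nat.zero_le k) (Nat.le_add_right k j)).symm

include hne

lemma cprod_ne (k : ℕ) : cprod lam k ≠ 0 := by
  unfold cprod
  rw [Finset.prod_ne_zero_iff]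
  intro i hi
  exact hne i (Finset.mem_Icc.mp hi).1

lemma prodd_ne (k j : ℕ) : prodd lam k j ≠ 0 := by
  unfold prodd
  rw [Finset.prod_ne_zero_iff]
  intro i hi
  exact hne i (by have := (Finset.mem_Icc.mp hi).1; omega)

lemma norm_prodd_eq (k j : ℕ) : ‖prodd lam k j‖ = ‖cprod lam (k + j)‖ / ‖cprod lam k‖ := by
  rw [cprod_split, norm_mul]
  rw [mul_comm, mul_div_assoc, div_self (norm_ne_zero_iff.mpr (cprod_ne hne k)), mul_one]

omit hne in
lemma summable_cprod_iff :
    (Summable fun n : ℕ => ‖cprod lam (n + 1)‖) ↔ Summable fun n : ℕ => ‖cprod lam n‖ :=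
  summable_nat_add_iff (f := fun n : ℕ => ‖cprod lam n‖) 1

lemma summable_prodd_iff (k : ℕ) :
    (Summable fun j : ℕ => ‖prodd lam k j‖) ↔ Summable fun n : ℕ => ‖cprod lam n‖ := by
  have h1 : (fun j : ℕ => ‖prodd lam k j‖)
      = fun j : ℕ => ‖cprod lam (j + k)‖ * (1 / ‖cprod lam k‖) := by
    funext j
    rw [norm_prodd_eq hne, Nat.add_comm j k]
    ring
  rw [h1]
  constructor
  · intro h
    have h2 := h.mul_right ‖cprod lam k‖
    have h3 : (fun j : ℕ => ‖cprod lam (j + k)‖ * (1 / ‖cprod lam k‖) * ‖cprod lam k‖)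
        = fun j : ℕ => ‖cprod lam (j + k)‖ := by
      funext j
      have hc : ‖cprod lam k‖ ≠ 0 := norm_ne_zero_iff.mpr (cprod_ne hne k)
      rw [mul_one_div, div_mul_eq_mul_div]
      exact mul_div_cancel_right₀ _ hc
    rw [h3] at h2
    exact (summable_nat_add_iff k).mp h2
  · intro h
    exact ((summable_nat_add_iff k).mpr h).mul_right _

end Prods
section ChainLemmas
variable {X : Type*} [NormedAddCommGroup X] [NormedSpace ℂ X]

/-- fixed-length chain -/
def MyChain (T : X →L[ℂ] X) (δ : ℝ) (m : ℕ) (f g : X) : Prop :=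
  ∃ u : ℕ → X, u 0 = f ∧ u m = g ∧ ∀ l, 1 ≤ l → l ≤ m → ‖u l - T (u (l - 1))‖ < δ

lemma MyChain.concat {T : X →L[ℂ] X} {δ : ℝ} {m m' : ℕ} {f g h : X}
    (h1 : MyChain T δ m f g) (hm' : 1 ≤ m') (h2 : MyChain T δ m' g h) :
    MyChain T δ (m + m') f h := by
  obtain ⟨u, hu0, hum, hus⟩ := h1
  obtain ⟨v, hv0, hvm, hvs⟩ := h2
  refine ⟨fun l => if l ≤ m then u l else v (l - m), by simp [hu0], by
    have : ¬ (m + m' ≤ m) := by omega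
    simp [this, hvm], ?_⟩
  intro l hl1 hlm
  by_cases hc : l ≤ m
  · have : l - 1 ≤ m := by omega
    simpa [hc, this] using hus l hl1 hc
  · have h2 : ¬ (l ≤ m) := hc
    have hval : (if l - 1 ≤ m then u (l-1) else v (l-1-m)) = v (l - m - 1) := by
      by_cases hd : l - 1 ≤ m
      · have hl : l = m + 1 := by omega
        subst hl
        have e : m + 1 - m - 1 = 0 := by omega
        simp [hum, hv0, e]
      · simp only [hd, if_false]
        congr 1
        omega
    simp only [h2, if_false, hval]
    exact hvs (l - m) (by omega) (by omega)

lemma MyChain.repeat {T : X →L[ℂ] X} {δ : ℝ} {m : ℕ} {f : X}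
    (h1 : MyChain T δ m f f) (hm : 1 ≤ m) : ∀ t, 1 ≤ t → MyChain T δ (t * m) f f := by
  intro t ht
  induction t with
  | zero => omega
  | succ n ih =>
    rcases Nat.eq_or_lt_of_le ht with h | h
    · simpa [← h] using h1
    · have := (ih (by omega)).concat hm h1
      simpa [Nat.succ_mul] using this

lemma MyChain.endpoint {T : X →L[ℂ] X} {δ₁ δ₂ : ℝ} {m : ℕ} {f g a : X}
    (h1 : MyChain T δ₁ m a g) (hm : 1 ≤ m) (hfg : ‖f - g‖ < δ₂) :
    MyChain T (δ₁ + δ₂) m a f := by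
  obtain ⟨u, hu0, hum, hus⟩ := h1
  refine ⟨fun l => if l = m then f else u l, ?_, by simp, ?_⟩
  · have : ¬ (0 = m) := by omega
    simp [this, hu0]
  · intro l hl1 hlm
    have hprev : ¬ (l - 1 = m) := by omega
    by_cases hc : l = m
    · subst hc
      simp only [if_pos rfl, hprev, if_neg]
      calc ‖f - T (u (l - 1))‖ ≤ ‖f - g‖ + ‖g - T (u (l - 1))‖ := by
            have := norm_add_le (f - g) (g - T (u (l - 1))); simpa using this
        _ < δ₂ + δ₁ := add_lt_add hfg (hum ▸ hus l hl1 le_rfl)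
        _ = δ₁ + δ₂ := by ring
    · simp only [if_neg hc, hprev, if_neg]
      exact (hus l hl1 hlm).trans_le (by linarith [norm_nonneg (f - g), hfg])

end ChainLemmas

section Backward
variable {lam : ℕ → ℂ}
  {B : lp (fun _ : ℕ => ℂ) 2 →L[ℂ] lp (fun _ : ℕ => ℂ) 2}
  (hB : ∀ (f : lp (fun _ : ℕ => ℂ) 2) (n : ℕ), (B f) n = lam (n + 1) * f (n + 1))
  (hne : ∀ n, 1 ≤ n → lam n ≠ 0)

include hB

lemma step_coord {δ : ℝ} {v w : X2} (h : ‖v - B w‖ < δ) (n : ℕ) :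
    ‖(v n : ℂ) - lam (n + 1) * w (n + 1)‖ < δ := by
  have h1 : ((v - B w : X2) : ∀ _ : ℕ, ℂ) n = (v n : ℂ) - lam (n + 1) * w (n + 1) := by
    rw [lp.coeFn_sub]
    simp only [Pi.sub_apply]
    rw [hB]
  calc ‖(v n : ℂ) - lam (n + 1) * w (n + 1)‖ = ‖((v - B w : X2) : ∀ _ : ℕ, ℂ) n‖ := by rw [h1]
    _ ≤ ‖v - B w‖ := coord_le_norm _ n
    _ < δ := h

lemma chain_coord_estimate {δ : ℝ} {m : ℕ} {u : ℕ → X2}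
    (hus : ∀ l, 1 ≤ l → l ≤ m → ‖u l - B (u (l - 1))‖ < δ) (k : ℕ) :
    ∀ j, j ≤ m → ‖((u m) k : ℂ) - prodd lam k j * (u (m - j)) (k + j)‖
      ≤ δ * ∑ i ∈ Finset.range j, ‖prodd lam k i‖ := by
  intro j
  induction j with
  | zero =>
    intro _
    simp [prodd]
  | succ j ih =>
    intro hj
    have ihj := ih (by omega)
    set l := m - j with hl
    have hl1 : 1 ≤ l := by omega
    have hlm : l ≤ m := by omega
    have hstep := step_coord hB (hus l hl1 hlm) (k + j)
    have key : ‖(prodd lam k j * (u l) (k + j) : ℂ)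
        - prodd lam k (j + 1) * (u (l - 1)) (k + (j + 1))‖ ≤ δ * ‖prodd lam k j‖ := by
      have e1 : prodd lam k (j + 1) = prodd lam k j * lam (k + j + 1) := by
        unfold prodd
        rw [show k + (j + 1) = (k + j) + 1 from rfl, Finset.prod_Icc_succ_top (by omega)]
      rw [e1]
      have e2 : (prodd lam k j * (u l) (k + j) : ℂ)
          - prodd lam k j * lam (k + j + 1) * (u (l - 1)) (k + (j + 1))
          = prodd lam k j * ((u l) (k + j) - lam ((k + j) + 1) * (u (l - 1)) ((k + j) + 1)) := by
        ring_nf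
      rw [e2, norm_mul, mul_comm]
      exact mul_le_mul_of_nonneg_right hstep.le (norm_nonneg _)
    calc ‖((u m) k : ℂ) - prodd lam k (j + 1) * (u (m - (j + 1))) (k + (j + 1))‖
        ≤ ‖((u m) k : ℂ) - prodd lam k j * (u l) (k + j)‖
          + ‖(prodd lam k j * (u l) (k + j) : ℂ)
              - prodd lam k (j + 1) * (u (m - (j + 1))) (k + (j + 1))‖ := by
          exact norm_sub_le_norm_sub_add_norm_sub _ _ _
      _ ≤ δ * ∑ i ∈ Finset.range j, ‖prodd lam k i‖ + δ * ‖prodd lam k j‖ := by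
          refine add_le_add ihj ?_
          have : m - (j + 1) = l - 1 := by omega
          rw [this]
          exact key
      _ = δ * ∑ i ∈ Finset.range (j + 1), ‖prodd lam k i‖ := by
          rw [Finset.sum_range_succ]; ring

end Backward

section Backward2
variable {lam : ℕ → ℂ}
  {B : lp (fun _ : ℕ => ℂ) 2 →L[ℂ] lp (fun _ : ℕ => ℂ) 2}
  (hB : ∀ (f : lp (fun _ : ℕ => ℂ) 2) (n : ℕ), (B f) n = lam (n + 1) * f (n + 1))
  (hne : ∀ n, 1 ≤ n → lam n ≠ 0)

include hB hne

lemma chainrec_zero (hS : Summable fun n : ℕ => ‖cprod lam (n + 1)‖)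
    (f : X2) (hf : ChainRecVec B f) : f = 0 := by
  apply lp.ext; funext k
  rw [lp.coeFn_zero, Pi.zero_apply]
  have hε : ∀ ε : ℝ, 0 < ε → ‖(f k : ℂ)‖ ≤ ε := by
    intro ε hεpos
    have hsum : Summable fun j : ℕ => ‖prodd lam k j‖ :=
      (summable_prodd_iff hne k).mpr ((summable_cprod_iff (lam := lam)).mp hS)
    set C := ∑' j : ℕ, ‖prodd lam k j‖ with hC
    have hC0 : 0 ≤ C := tsum_nonneg fun _ => norm_nonneg _
    have hδpos : 0 < ε / (2 * (C + 1)) := by positivity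
    obtain ⟨m, u, hm, hu0, hum, hus⟩ := hf _ hδpos
    have htend : Filter.Tendsto (fun j => ‖prodd lam k j‖ * ‖f‖) Filter.atTop (nhds 0) := by
      simpa using hsum.tendsto_atTop_zero.mul_const ‖f‖
    obtain ⟨J, hJ⟩ := Metric.tendsto_atTop.mp htend (ε / 2) (by linarith)
    have hchain : MyChain B (ε / (2 * (C + 1))) m f f := ⟨u, hu0, hum, hus⟩
    obtain ⟨v, hv0, hvm, hvs⟩ := hchain.repeat hm (J + 1) (by omega)
    set L := (J + 1) * m with hL
    have hest := chain_coord_estimate hB hvs k L le_rfl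
    rw [hvm] at hest
    have hLJ : J ≤ L := by
      calc J ≤ J + 1 := by omega
        _ ≤ (J + 1) * m := Nat.le_mul_of_pos_right _ (by omega)
    have htail : ‖prodd lam k L‖ * ‖f‖ < ε / 2 := by
      have := hJ L hLJ
      rw [Real.dist_eq, sub_zero] at this
      calc ‖prodd lam k L‖ * ‖f‖ ≤ |‖prodd lam k L‖ * ‖f‖| := le_abs_self _
        _ < ε / 2 := this
    have hsumle : ∑ i ∈ Finset.range L, ‖prodd lam k i‖ ≤ C :=
      Summable.sum_le_tsum _ (fun _ _ => norm_nonneg _) hsum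
    have hv0coord : ‖((v (L - L)) (k + L) : ℂ)‖ ≤ ‖f‖ := by
      simp only [Nat.sub_self]
      rw [hv0]
      exact coord_le_norm f (k + L)
    calc ‖(f k : ℂ)‖ ≤ ‖(f k : ℂ) - prodd lam k L * (v (L - L)) (k + L)‖
          + ‖prodd lam k L * ((v (L - L)) (k + L) : ℂ)‖ := by
          have := norm_add_le ((f k : ℂ) - prodd lam k L * (v (L - L)) (k + L))
            (prodd lam k L * ((v (L - L)) (k + L) : ℂ))
          simpa using this
      _ ≤ ε / (2 * (C + 1)) * C + ‖prodd lam k L‖ * ‖f‖ := by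
          refine add_le_add (hest.trans ?_) ?_
          · exact mul_le_mul_of_nonneg_left hsumle hδpos.le
          · rw [norm_mul]
            exact mul_le_mul_of_nonneg_left hv0coord (norm_nonneg _)
      _ ≤ ε / 2 + ε / 2 := by
          refine add_le_add ?_ htail.le
          rw [div_mul_eq_mul_div, div_le_div_iff₀ (by positivity) (by norm_num)]
          nlinarith
      _ = ε := by ring
  by_contra hne0
  have hpos : 0 < ‖(f k : ℂ)‖ := by
    simpa [norm_pos_iff] using hne0
  have := hε (‖(f k : ℂ)‖ / 2) (by linarith)
  linarith

end Backward2

lemma sgl_sum (k : ℕ) {ι : Type*} (s : Finset ι) (c : ι → ℂ) :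
    sgl k (∑ i ∈ s, c i) = ∑ i ∈ s, sgl k (c i) := by
  apply lp.ext; funext n
  rw [lp.coeFn_sum, Finset.sum_apply]
  rw [show ((sgl k (∑ i ∈ s, c i)) : ∀ _ : ℕ, ℂ) n = (sgl k (∑ i ∈ s, c i)) n from rfl]
  rw [sgl_apply]
  by_cases h : n = k
  · simp only [h, if_true]
    refine Finset.sum_congr rfl fun i _ => ?_
    rw [show ((sgl k (c i)) : ∀ _ : ℕ, ℂ) k = (sgl k (c i)) k from rfl, sgl_apply, if_pos rfl]
  · simp only [h, if_false]
    symm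
    refine Finset.sum_eq_zero fun i _ => ?_
    rw [show ((sgl k (c i)) : ∀ _ : ℕ, ℂ) n = (sgl k (c i)) n from rfl, sgl_apply, if_neg h]

section Forward
variable {lam : ℕ → ℂ}
  {B : lp (fun _ : ℕ => ℂ) 2 →L[ℂ] lp (fun _ : ℕ => ℂ) 2}
  (hB : ∀ (f : lp (fun _ : ℕ => ℂ) 2) (n : ℕ), (B f) n = lam (n + 1) * f (n + 1))
  (hne : ∀ n, 1 ≤ n → lam n ≠ 0)
  (hNS : ¬ Summable fun n : ℕ => ‖cprod lam (n + 1)‖)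

/-- partial sums of norms of partial products -/
noncomputable def Sk (lam : ℕ → ℂ) (k N : ℕ) : ℝ := ∑ j ∈ Finset.range N, ‖prodd lam k j‖

include hne hNS in
lemma Sk_tendsto (k : ℕ) : Filter.Tendsto (fun N => Sk lam k N) Filter.atTop Filter.atTop := by
  have hns : ¬ Summable fun j : ℕ => ‖prodd lam k j‖ := by
    intro h
    exact hNS ((summable_cprod_iff (lam := lam)).mpr ((summable_prodd_iff hne k).mp h))
  exact (not_summable_iff_tendsto_nat_atTop_of_nonneg (fun _ => norm_nonneg _)).mp hns

include hne in
lemma Sk_pos (k N : ℕ) (hN : 1 ≤ N) : 1 ≤ Sk lam k N := by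
  have h0 : ‖prodd lam k 0‖ = 1 := by
    simp [prodd]
  calc (1:ℝ) = ‖prodd lam k 0‖ := h0.symm
    _ ≤ ∑ j ∈ Finset.range N, ‖prodd lam k j‖ :=
        Finset.single_le_sum (fun j _ => norm_nonneg _) (Finset.mem_range.mpr (by omega))

include hB hne hNS in
lemma chain_zero_to (gc : ℕ → ℂ) (K : ℕ) {δ : ℝ} (hδ : 0 < δ) :
    ∃ N, 1 ≤ N ∧ MyChain B δ N 0 (∑ k ∈ Finset.range (K + 1), sgl k (gc k)) := by
  classical
  -- choose N
  have hev : ∀ᶠ N in Filter.atTop, ∀ k ∈ Finset.range (K + 1),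
      ((K : ℝ) + 1) * ‖gc k‖ / δ < Sk lam k N := by
    rw [Finset.eventually_all]
    intro k _
    exact (Sk_tendsto hne hNS k).eventually_gt_atTop _
  obtain ⟨N, hN, hN1⟩ := (hev.and (Filter.eventually_ge_atTop 1)).exists
  refine ⟨N, hN1, ?_⟩
  -- the coefficients
  set α : ℕ → ℕ → ℂ := fun k j => gc k * ((‖prodd lam k j‖ : ℂ) / (Sk lam k N : ℂ)) / prodd lam k j
    with hα
  have hSpos : ∀ k, (0:ℝ) < Sk lam k N := fun k => lt_of_lt_of_le one_pos (Sk_pos hne k N hN1)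
  have hαval : ∀ k j, α k j * prodd lam k j = gc k * ((‖prodd lam k j‖ : ℂ) / (Sk lam k N : ℂ)) :=
    fun k j => div_mul_cancel₀ _ (prodd_ne hne k j)
  have hαnorm : ∀ k j, ‖α k j‖ = ‖gc k‖ / Sk lam k N := by
    intro k j
    rw [hα]
    rw [norm_div, norm_mul, norm_div]
    rw [Complex.norm_real, Complex.norm_real]
    rw [Real.norm_of_nonneg (norm_nonneg _), Real.norm_of_nonneg (hSpos k).le]
    have hp : ‖prodd lam k j‖ ≠ 0 := norm_ne_zero_iff.mpr (prodd_ne hne k j)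
    have hs : Sk lam k N ≠ 0 := (hSpos k).ne'
    rw [mul_div_assoc, div_right_comm, div_self hp, mul_one_div]
  -- error vectors and chain
  set err : ℕ → X2 := fun l => ∑ k ∈ Finset.range (K + 1), sgl (k + (N - l)) (α k (N - l))
    with herr
  set u : ℕ → X2 := fun l => ∑ i ∈ Finset.Icc 1 l, (B ^ (l - i)) (err i) with hu
  have herr_eq : ∀ l, err l = ∑ k ∈ Finset.range (K + 1), sgl (k + (N - l)) (α k (N - l)) :=
    fun _ => rfl
  have hu_eq : ∀ l, u l = ∑ i ∈ Finset.Icc 1 l, (B ^ (l - i)) (err i) := fun _ => rfl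
  have hstep : ∀ l, 1 ≤ l → l ≤ N → u l - B (u (l - 1)) = err l := by
    intro l hl1 _
    obtain ⟨b, rfl⟩ : ∃ b, l = b + 1 := ⟨l - 1, by omega⟩
    have hBu : B (u b) = ∑ i ∈ Finset.Icc 1 b, (B ^ (b + 1 - i)) (err i) := by
      rw [hu_eq, map_sum]
      refine Finset.sum_congr rfl fun i hi => ?_
      have hi1 := (Finset.mem_Icc.mp hi).2
      have he : b + 1 - i = (b - i) + 1 := by omega
      rw [he, pow_succ', ContinuousLinearMap.mul_apply]
    have hul : u (b + 1) = (∑ i ∈ Finset.Icc 1 b, (B ^ (b + 1 - i)) (err i)) + err (b + 1) := by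
      rw [hu_eq, Finset.sum_Icc_succ_top (by omega)]
      congr 1
      rw [Nat.sub_self, pow_zero, ContinuousLinearMap.one_apply]
    rw [Nat.add_sub_cancel, hul, hBu]
    abel
  have herrnorm : ∀ l, 1 ≤ l → l ≤ N → ‖err l‖ < δ := by
    intro l _ _
    calc ‖err l‖ ≤ ∑ k ∈ Finset.range (K + 1), ‖sgl (k + (N - l)) (α k (N - l))‖ :=
          norm_sum_le _ _
      _ = ∑ k ∈ Finset.range (K + 1), ‖gc k‖ / Sk lam k N := by
          refine Finset.sum_congr rfl fun k _ => ?_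
          rw [norm_sgl, hαnorm]
      _ < ∑ k ∈ Finset.range (K + 1), δ / (K + 1) := by
          refine Finset.sum_lt_sum_of_nonempty ⟨0, Finset.mem_range.mpr (by omega)⟩ ?_
          intro k hk
          have hKk := hN k hk
          rw [div_lt_div_iff₀ (hSpos k) (by positivity)]
          rw [div_lt_iff₀ hδ] at hKk
          have : (0:ℝ) < (K:ℝ) + 1 := by positivity
          nlinarith [hSpos k]
      _ = δ := by
          rw [Finset.sum_const, Finset.card_range, nsmul_eq_mul]
          push_cast
          field_simp
  have hend : u N = ∑ k ∈ Finset.range (K + 1), sgl k (gc k) := by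
    rw [hu_eq]
    have h1 : ∀ i ∈ Finset.Icc 1 N, (B ^ (N - i)) (err i)
        = ∑ k ∈ Finset.range (K + 1), sgl k (prodd lam k (N - i) * α k (N - i)) := by
      intro i _
      rw [herr_eq]
      rw [map_sum]
      refine Finset.sum_congr rfl fun k _ => ?_
      exact Bpow_sgl hB k (N - i) _
    rw [Finset.sum_congr rfl h1, Finset.sum_comm]
    refine Finset.sum_congr rfl fun k _ => ?_
    have h2 : ∑ i ∈ Finset.Icc 1 N, sgl k (prodd lam k (N - i) * α k (N - i))
        = sgl k (∑ i ∈ Finset.Icc 1 N, prodd lam k (N - i) * α k (N - i)) :=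
      (sgl_sum k _ _).symm
    rw [h2]
    congr 1
    have h3 : ∑ i ∈ Finset.Icc 1 N, prodd lam k (N - i) * α k (N - i)
        = ∑ j ∈ Finset.range N, prodd lam k j * α k j := by
      refine Finset.sum_nbij' (fun i => N - i) (fun j => N - j) ?_ ?_ ?_ ?_ ?_
      · intro i hi
        have := Finset.mem_Icc.mp hi
        beta_reduce
        exact Finset.mem_range.mpr (by omega)
      · intro j hj
        have := Finset.mem_range.mp hj
        beta_reduce
        exact Finset.mem_Icc.mpr (by omega)
      · intro i hi
        have := Finset.mem_Icc.mp hi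
        beta_reduce
        omega
      · intro j hj
        have := Finset.mem_range.mp hj
        beta_reduce
        omega
      · intro i _
        rfl
    rw [h3]
    have h4 : ∀ j ∈ Finset.range N, prodd lam k j * α k j
        = gc k * ((‖prodd lam k j‖ : ℂ) / (Sk lam k N : ℂ)) := by
      intro j _
      rw [mul_comm]
      exact hαval k j
    rw [Finset.sum_congr rfl h4, ← Finset.mul_sum]
    have h5 : ∑ j ∈ Finset.range N, ((‖prodd lam k j‖ : ℂ) / (Sk lam k N : ℂ))
        = ((∑ j ∈ Finset.range N, ‖prodd lam k j‖ : ℝ) : ℂ) / (Sk lam k N : ℂ) := by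
      rw [← Finset.sum_div]
      norm_cast
    rw [h5]
    rw [show (∑ j ∈ Finset.range N, ‖prodd lam k j‖ : ℝ) = Sk lam k N from rfl]
    rw [div_self (by exact_mod_cast (hSpos k).ne')]
    ring
  refine ⟨u, ?_, hend, fun l hl1 hlN => ?_⟩
  · rw [hu_eq]
    simp
  · rw [hstep l hl1 hlN]
    exact herrnorm l hl1 hlN

end Forward

section Forward2
variable {lam : ℕ → ℂ}
  {B : lp (fun _ : ℕ => ℂ) 2 →L[ℂ] lp (fun _ : ℕ => ℂ) 2}
  (hB : ∀ (f : lp (fun _ : ℕ => ℂ) 2) (n : ℕ), (B f) n = lam (n + 1) * f (n + 1))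
  (hne : ∀ n, 1 ≤ n → lam n ≠ 0)
  (hNS : ¬ Summable fun n : ℕ => ‖cprod lam (n + 1)‖)

include hB hne hNS in
lemma chainrec_all (f : X2) : ChainRecVec B f := by
  intro δ hδ
  haveI : Fact ((1:ℝ≥0∞) ≤ 2) := ⟨one_le_two⟩
  set η := δ / (2 * (‖B‖ + 1)) with hη
  have hb0 : (0:ℝ) ≤ ‖B‖ := norm_nonneg _
  have hηpos : 0 < η := div_pos hδ (by linarith)
  have hη2 : η ≤ δ / 2 := by
    rw [hη, div_le_div_iff₀ (by linarith) (by norm_num)]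
    nlinarith
  have hsum := lp.hasSum_single (E := fun _ : ℕ => ℂ) (p := 2) (by norm_num) f
  rw [HasSum] at hsum
  have hev := Metric.tendsto_nhds.mp hsum η hηpos
  rw [SummationFilter.unconditional_filter, Filter.eventually_atTop] at hev
  obtain ⟨s₀, hs₀⟩ := hev
  set K := s₀.sup id with hK
  have hsub : s₀ ⊆ Finset.range (K + 1) := fun i hi =>
    Finset.mem_range.mpr (Nat.lt_succ_of_le (Finset.le_sup (f := id) hi))
  set g : X2 := ∑ k ∈ Finset.range (K + 1), sgl k (f k) with hg
  have hgf : ‖g - f‖ < η := by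
    have := hs₀ (Finset.range (K + 1)) hsub
    rw [dist_eq_norm] at this
    exact this
  have hBη : ‖B‖ * η < δ := by
    have hkey : η * (2 * (‖B‖ + 1)) = δ := by
      rw [hη]; exact div_mul_cancel₀ _ (by linarith)
    nlinarith [hηpos]
  have hchain1 : MyChain B δ (K + 2) f 0 := by
    refine ⟨fun l => if l = 0 then f else (B ^ l) g, by simp, ?_, ?_⟩
    · simp only [if_neg (by omega : ¬ (K + 2 = 0))]
      rw [hg, map_sum]
      refine Finset.sum_eq_zero fun k hk => ?_
      exact Bpow_sgl_zero hB k (K + 2) _ (by have := Finset.mem_range.mp hk; omega)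
    · intro l hl1 hlm
      by_cases h1 : l = 1
      · subst h1
        simp only [if_neg one_ne_zero, Nat.sub_self, reduceIte, pow_one]
        rw [show B g - B f = B (g - f) from (map_sub B g f).symm]
        calc ‖B (g - f)‖ ≤ ‖B‖ * ‖g - f‖ := B.le_opNorm _
          _ ≤ ‖B‖ * η := mul_le_mul_of_nonneg_left hgf.le hb0
          _ < δ := hBη
      · have e : l = (l - 1) + 1 := by omega
        simp only [if_neg (by omega : ¬ l = 0), if_neg (by omega : ¬ l - 1 = 0)]
        have hBg : (B ^ l) g = B ((B ^ (l - 1)) g) := by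
          conv_lhs => rw [e]
          rw [pow_succ', ContinuousLinearMap.mul_apply]
        rw [hBg, sub_self, norm_zero]
        exact hδ
  obtain ⟨N, hN1, hc2⟩ := chain_zero_to hB hne hNS (fun k => f k) K (by positivity : (0:ℝ) < δ / 2)
  have hc2g : MyChain B (δ / 2) N 0 g := hc2
  have hfg2 : ‖f - g‖ < δ / 2 := by
    rw [norm_sub_rev]
    linarith
  have hc2f : MyChain B δ N 0 f := by
    have := hc2g.endpoint hN1 hfg2
    rwa [show δ / 2 + δ / 2 = δ by ring] at this
  obtain ⟨u, hu0, hum, hus⟩ := hchain1.concat hN1 hc2f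
  exact ⟨K + 2 + N, u, by omega, hu0, hum, hus⟩

end Forward2


theorem stmt_15 (lam : ℕ → ℂ) (hne : ∀ n, 1 ≤ n → lam n ≠ 0)
    (hbdd : ∃ C : ℝ, ∀ n, ‖lam n‖ ≤ C)
    (B : lp (fun _ : ℕ => ℂ) 2 →L[ℂ] lp (fun _ : ℕ => ℂ) 2)
    (hB : ∀ (f : lp (fun _ : ℕ => ℂ) 2) (n : ℕ), (B f) n = lam (n + 1) * f (n + 1)) :
    ((∀ f : lp (fun _ : ℕ => ℂ) 2, ChainRecVec B f) ↔
      (∃ f : lp (fun _ : ℕ => ℂ) 2, f ≠ 0 ∧ ChainRecVec B f)) ∧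
    ((∀ f : lp (fun _ : ℕ => ℂ) 2, ChainRecVec B f) ↔
      ¬ Summable fun n : ℕ => ‖∏ i ∈ Finset.Icc 1 (n + 1), lam i‖) := by
  have hSiff : (Summable fun n : ℕ => ‖∏ i ∈ Finset.Icc 1 (n + 1), lam i‖)
      = (Summable fun n : ℕ => ‖cprod lam (n + 1)‖) := rfl
  have he0 : (sgl 0 1 : X2) ≠ 0 := by
    intro h
    have h1 : ((sgl 0 1 : X2) : ∀ _ : ℕ, ℂ) 0 = 0 := by rw [h]; rfl
    rw [sgl_apply 0 1 0, if_pos rfl] at h1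
    exact one_ne_zero h1
  constructor
  · constructor
    · intro hA
      exact ⟨sgl 0 1, he0, hA _⟩
    · rintro ⟨f, hf0, hfc⟩ g
      by_cases hS : Summable fun n : ℕ => ‖cprod lam (n + 1)‖
      · exact absurd (chainrec_zero hB hne hS f hfc) hf0
      · exact chainrec_all hB hne hS g
  · constructor
    · intro hA hS
      rw [hSiff] at hS
      exact he0 (chainrec_zero hB hne hS _ (hA _))
    · intro hS g
      rw [hSiff] at hS
      exact chainrec_all hB hne hS g
end
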